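/- arXiv:0903.0776 — 6 statements merged into one kernel-verified Lean document; each statement's English description precedes it below -/
import Mathlib

section
/- Let n ≥ 3 be an odd integer. There exist a constant c > 0 and a positive integer N ≥ 3 such that for all integers k, p with |k| ≥ N and p ≠ k, and for all t ∈ [−π/2, 3π/2), one has |(2πk + t)^n − (2πp + t)^n| > c (ln|k|)^{−1} (||k| − |p|| + 1)(|k| + |p|)^{n−1}. -/
/-!
Put `x = 2πk + t`, `y = 2πp + t`. For odd `n`, `|xⁿ - yⁿ| ≥ ½ |x - y| max(|x|, |y|)ⁿ⁻¹`.
Since `k ≠ p`, `|x - y| = 2π|k - p| ≥ π(||k| - |p|| + 1)`, and since `|t| ≤ 3π/2`,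
`max(|x|, |y|) ≥ |k| + |p|` as soon as `|k| ≥ 2`. For `|k| ≥ 3 > e` the factor `(ln|k|)⁻¹` is at
most `1`, so `c = 1` works.
-/

open Real

section PowSubPow

variable {α : Type*} [CommRing α] [LinearOrder α] [IsStrictOrderedRing α] {n : ℕ}

lemma sub_mul_pow_pred_le_pow_sub_pow (hn : n ≠ 0) {x y : α} (hy : 0 ≤ y) (hyx : y ≤ x) :
    (x - y) * x ^ (n - 1) ≤ x ^ n - y ^ n := by
  obtain ⟨m, rfl⟩ := Nat.exists_eq_succ_of_ne_zero hn
  have hpow : y ^ m ≤ x ^ m := pow_le_pow_left₀ hy hyx m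
  simp only [Nat.succ_sub_one, pow_succ]
  nlinarith [mul_le_mul_of_nonneg_left hpow hy]

lemma abs_sub_mul_max_pow_pred_le_of_nonneg (hn : n ≠ 0) {x y : α} (hx : 0 ≤ x) (hy : 0 ≤ y) :
    |x - y| * max x y ^ (n - 1) ≤ |x ^ n - y ^ n| := by
  wlog hyx : y ≤ x generalizing x y
  · rw [abs_sub_comm x, abs_sub_comm (x ^ n), max_comm]
    exact this hy hx (le_of_not_ge hyx)
  rw [abs_of_nonneg (sub_nonneg.2 hyx), max_eq_left hyx,
    abs_of_nonneg (sub_nonneg.2 (pow_le_pow_left₀ hy hyx n))]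
  exact sub_mul_pow_pred_le_pow_sub_pow hn hy hyx

lemma add_mul_max_pow_pred_le (hn : n ≠ 0) {a b : α} (ha : 0 ≤ a) (hb : 0 ≤ b) :
    (a + b) * max a b ^ (n - 1) ≤ 2 * (a ^ n + b ^ n) := by
  have hmax : max a b ^ n ≤ a ^ n + b ^ n := by
    rcases max_choice a b with h | h <;> rw [h] <;> nlinarith [pow_nonneg ha n, pow_nonneg hb n]
  calc (a + b) * max a b ^ (n - 1) ≤ (2 * max a b) * max a b ^ (n - 1) := by
        gcongr; linarith [le_max_left a b, le_max_right a b]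
    _ = 2 * max a b ^ n := by rw [mul_assoc, ← pow_succ', Nat.sub_add_cancel (Nat.one_le_iff_ne_zero.2 hn)]
    _ ≤ 2 * (a ^ n + b ^ n) := by gcongr

/-- The factor `2` is needed only when `x` and `y` have opposite signs. -/
lemma Odd.abs_sub_mul_max_pow_pred_le (hn : Odd n) (x y : α) :
    |x - y| * max |x| |y| ^ (n - 1) ≤ 2 * |x ^ n - y ^ n| := by
  have hn0 : n ≠ 0 := hn.pos.ne'
  wlog hx : 0 ≤ x generalizing x y
  · have := this (-x) (-y) (by linarith)
    rwa [abs_neg, abs_neg, hn.neg_pow, hn.neg_pow, neg_sub_neg, abs_sub_comm,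
      neg_sub_neg, abs_sub_comm (y ^ n)] at this
  rcases le_total 0 y with hy | hy
  · have h := abs_sub_mul_max_pow_pred_le_of_nonneg hn0 hx hy
    rw [abs_of_nonneg hx, abs_of_nonneg hy]
    linarith [abs_nonneg (x ^ n - y ^ n)]
  · have hyn : y ^ n = -|y| ^ n := by rw [abs_of_nonpos hy, hn.neg_pow, neg_neg]
    have hsub : |x - y| = |x| + |y| := by
      rw [abs_of_nonneg hx, abs_of_nonpos hy, abs_of_nonneg (by linarith)]; ring
    have hpow : |x ^ n - y ^ n| = |x| ^ n + |y| ^ n := by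
      rw [hyn, abs_of_nonneg hx, sub_neg_eq_add,
        abs_of_nonneg (by positivity)]
    rw [hsub, hpow]
    exact add_mul_max_pow_pred_le hn0 (abs_nonneg x) (abs_nonneg y)

end PowSubPow

lemma two_mul_abs_le_abs_two_pi_mul_add {m t : ℝ} (hm : 2 ≤ |m|) (ht : |t| ≤ 3 * π / 2) :
    2 * |m| ≤ |2 * π * m + t| := by
  have hπ := pi_gt_three
  have h : |2 * π * m| = 2 * π * |m| := by
    rw [abs_mul, abs_of_pos (by positivity : (0:ℝ) < 2 * π)]
  have := abs_sub_abs_le_abs_sub (2 * π * m) (-t)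
  rw [sub_neg_eq_add, abs_neg, h] at this
  nlinarith

lemma abs_add_abs_le_max_abs_two_pi_mul_add {k p t : ℝ} (hk : 2 ≤ |k|) (ht : |t| ≤ 3 * π / 2) :
    |k| + |p| ≤ max |2 * π * k + t| |2 * π * p + t| := by
  rcases le_total |p| |k| with h | h
  · linarith [two_mul_abs_le_abs_two_pi_mul_add hk ht, le_max_left |2 * π * k + t| |2 * π * p + t|]
  · linarith [two_mul_abs_le_abs_two_pi_mul_add (hk.trans h) ht,
      le_max_right |2 * π * k + t| |2 * π * p + t|]

lemma abs_abs_sub_abs_add_one_le_two_mul_abs_sub {k p : ℤ} (h : p ≠ k) :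
    |(|(k:ℝ)| - |(p:ℝ)|)| + 1 ≤ 2 * |(k:ℝ) - p| := by
  have h1 : (1:ℝ) ≤ |(k:ℝ) - p| := by
    exact_mod_cast Int.one_le_abs (sub_ne_zero.2 h.symm)
  linarith [abs_abs_sub_abs_le_abs_sub (k:ℝ) p]

lemma one_le_log_of_three_le {x : ℝ} (hx : 3 ≤ x) : 1 ≤ log x := by
  rw [← log_exp 1]
  exact log_le_log (exp_pos 1) (by linarith [exp_one_lt_d9])

theorem stmt_0_general (n : ℕ) (hodd : Odd n) :
    ∃ c : ℝ, 0 < c ∧ ∃ N : ℕ, 3 ≤ N ∧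
      ∀ k p : ℤ, (N : ℤ) ≤ |k| → p ≠ k →
        ∀ t ∈ Set.Ico (-(π/2)) (3*π/2),
          |(2*π*(k:ℝ) + t)^n - (2*π*(p:ℝ) + t)^n| >
            c * (Real.log |(k:ℝ)|)⁻¹ * (|(|(k:ℝ)| - |(p:ℝ)|)| + 1)
              * (|(k:ℝ)| + |(p:ℝ)|)^(n-1) := by
  refine ⟨1, one_pos, 3, le_rfl, fun k p hk hpk t ht => ?_⟩
  have hk3 : (3:ℝ) ≤ |(k:ℝ)| := by rw [← Int.cast_abs]; exact_mod_cast hk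
  have ht' : |t| ≤ 3 * π / 2 := abs_le.2 ⟨by linarith [ht.1, pi_pos], ht.2.le⟩
  set D := |(|(k:ℝ)| - |(p:ℝ)|)| + 1
  set S := |(k:ℝ)| + |(p:ℝ)|
  set x := 2 * π * (k:ℝ) + t
  set y := 2 * π * (p:ℝ) + t
  have hDS : 0 < D * S ^ (n - 1) := by positivity
  have hlog : (log |(k:ℝ)|)⁻¹ ≤ 1 := inv_le_one_of_one_le₀ (one_le_log_of_three_le hk3)
  have hxy : |x - y| = 2 * π * |(k:ℝ) - p| := by
    rw [show x - y = 2 * π * ((k:ℝ) - p) by ring, abs_mul, abs_of_pos (by positivity)]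
  have hD : π * D ≤ |x - y| := by
    rw [hxy]; nlinarith [abs_abs_sub_abs_add_one_le_two_mul_abs_sub hpk, pi_pos]
  have hS : S ^ (n - 1) ≤ max |x| |y| ^ (n - 1) := by
    gcongr; exact abs_add_abs_le_max_abs_two_pi_mul_add (by linarith) ht'
  calc 1 * (log |(k:ℝ)|)⁻¹ * D * S ^ (n - 1) ≤ D * S ^ (n - 1) := by
        rw [one_mul, mul_assoc]; exact mul_le_of_le_one_left hDS.le hlog
    _ < π * D * S ^ (n - 1) / 2 := by nlinarith [pi_gt_three]
    _ ≤ |x - y| * max |x| |y| ^ (n - 1) / 2 := by gcongr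
    _ ≤ |x ^ n - y ^ n| := by linarith [hodd.abs_sub_mul_max_pow_pred_le x y]

/-- Let `n ≥ 3` be an odd integer. There exist a constant `c > 0` and a
positive integer `N ≥ 3` such that for all integers `k, p` with `|k| ≥ N` and `p ≠ k`,
and for all `t ∈ [−π/2, 3π/2)`, one has
`|(2πk + t)^n − (2πp + t)^n| > c (ln|k|)⁻¹ (||k| − |p|| + 1)(|k| + |p|)^{n−1}`. -/
theorem stmt_0 (n : ℕ) (hn : 3 ≤ n) (hodd : Odd n) :
    ∃ c : ℝ, 0 < c ∧ ∃ N : ℕ, 3 ≤ N ∧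
      ∀ k p : ℤ, (N : ℤ) ≤ |k| → p ≠ k →
        ∀ t ∈ Set.Ico (-(π/2)) (3*π/2),
          |(2*π*(k:ℝ) + t)^n - (2*π*(p:ℝ) + t)^n| >
            c * (Real.log |(k:ℝ)|)⁻¹ * (|(|(k:ℝ)| - |(p:ℝ)|)| + 1)
              * (|(k:ℝ)| + |(p:ℝ)|)^(n-1) :=
  stmt_0_general n hodd
end

section
/- Let n ≥ 2 be an even integer. There exist a constant c > 0 and a positive integer N ≥ 3 such that for all integers k, p with |k| ≥ N and p ≠ k, and for all t ∈ T(k), one has |(2πk + t)^n − (2πp + t)^n| > c (ln|k|)^{−1} (||k| − |p|| + 1)(|k| + |p|)^{n−1}. -/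
open Real

/-- The set `T(k) = [−π/2, 3π/2) \ ((−1/ln|k|, 1/ln|k|) ∪ (π − 1/ln|k|, π + 1/ln|k|))`. -/
def Tset (k : ℤ) : Set ℝ :=
  Set.Ico (-(π/2)) (3*π/2) \
    (Set.Ioo (-(Real.log |(k:ℝ)|)⁻¹) (Real.log |(k:ℝ)|)⁻¹ ∪
      Set.Ioo (π - (Real.log |(k:ℝ)|)⁻¹) (π + (Real.log |(k:ℝ)|)⁻¹))

private lemma aux_pow (x y : ℝ) (n : ℕ) (hn : 1 ≤ n) (hy : 0 ≤ y) (hxy : y ≤ x) :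
    (x - y) * x ^ (n-1) ≤ x ^ n - y ^ n := by
  have key : y ^ (n-1) ≤ x ^ (n-1) := pow_le_pow_left₀ hy hxy _
  have hxn : x ^ n = x * x ^ (n-1) := by
    conv_lhs => rw [show n = 1 + (n-1) by omega]
    rw [pow_add, pow_one]
  have hyn : y ^ n = y * y ^ (n-1) := by
    conv_lhs => rw [show n = 1 + (n-1) by omega]
    rw [pow_add, pow_one]
  nlinarith [mul_le_mul_of_nonneg_left key hy]

private lemma abs_lb (m : ℤ) (t : ℝ) :
    2*π*|(m:ℝ)| - |t| ≤ |2*π*(m:ℝ) + t| := by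
  have h2 : |2*π*(m:ℝ)| ≤ |2*π*(m:ℝ) + t| + |t| := by
    calc |2*π*(m:ℝ)| = |(2*π*(m:ℝ) + t) + (-t)| := by congr 1; ring
    _ ≤ |2*π*(m:ℝ) + t| + |-t| := abs_add_le _ _
    _ = |2*π*(m:ℝ) + t| + |t| := by rw [abs_neg]
  have h3 : |2*π*(m:ℝ)| = 2*π*|(m:ℝ)| := by
    rw [abs_mul, abs_of_pos (by positivity : (0:ℝ) < 2*π)]
  linarith

private lemma mixed (e : ℤ) (t δ : ℝ) (hδ : 0 < δ) (hδ1 : δ ≤ 1)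
    (ht1 : -(π/2) ≤ t) (ht2 : t < 3*π/2) (ht0 : δ ≤ |t|) (htpi : δ ≤ |π - t|) :
    δ * (|(e:ℝ)| + 1) ≤ |2*π*(e:ℝ) + 2*t| := by
  have hπ := Real.pi_gt_three
  have htabs : |t| ≤ 3*π/2 := by
    rw [abs_le]; constructor <;> nlinarith
  obtain he | he | he | he : e = 0 ∨ e = 1 ∨ e = -1 ∨ 2 ≤ e.natAbs := by omega
  · subst he
    have h2 : |2*π*((0:ℤ):ℝ) + 2*t| = 2*|t| := by
      rw [show 2*π*((0:ℤ):ℝ) + 2*t = 2*t by push_cast; ring, abs_mul]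
      norm_num
    rw [h2]
    push_cast
    norm_num
    linarith
  · subst he
    have hpos : 0 < 2*π*((1:ℤ):ℝ) + 2*t := by push_cast; nlinarith
    rw [abs_of_pos hpos]
    push_cast
    norm_num
    nlinarith
  · subst he
    have h2 : |2*π*((-1:ℤ):ℝ) + 2*t| = 2*|π - t| := by
      rw [show 2*π*((-1:ℤ):ℝ) + 2*t = -(2*(π - t)) by push_cast; ring, abs_neg, abs_mul]
      norm_num
    rw [h2]
    push_cast
    norm_num
    nlinarith
  · have hE : (2:ℝ) ≤ |(e:ℝ)| := by
      have : ((e.natAbs : ℕ) : ℝ) = |(e:ℝ)| := by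
        rw [Nat.cast_natAbs]
        exact Int.cast_abs
      rw [← this]
      exact_mod_cast he
    have h1 := abs_lb e (2*t)
    have h4 : |(2:ℝ)*t| = 2*|t| := by rw [abs_mul]; norm_num
    nlinarith [mul_le_mul_of_nonneg_right hδ1 (by positivity : (0:ℝ) ≤ |(e:ℝ)| + 1)]

set_option maxHeartbeats 1000000 in
private lemma dist_lb (k p : ℤ) (hk : 3 ≤ |k|) (hpk : p ≠ k) (t δ : ℝ)
    (hδ : 0 < δ) (hδ1 : δ ≤ 1)
    (ht1 : -(π/2) ≤ t) (ht2 : t < 3*π/2) (ht0 : δ ≤ |t|) (htpi : δ ≤ |π - t|) :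
    δ * (|(|(k:ℝ)| - |(p:ℝ)|)| + 1) ≤ |(|2*π*(k:ℝ) + t| - |2*π*(p:ℝ) + t|)| := by
  have hπ := Real.pi_gt_three
  have htabs : |t| ≤ 3*π/2 := by rw [abs_le]; constructor <;> nlinarith
  have hk' : k ≤ -3 ∨ 3 ≤ k := by rcases abs_cases k with ⟨h1,h2⟩|⟨h1,h2⟩ <;> omega
  rcases hk' with hk0 | hk0
  · -- k ≤ -3
    have hkR3 : (k:ℝ) ≤ -3 := by exact_mod_cast hk0
    have hX : |2*π*(k:ℝ) + t| = -(2*π*(k:ℝ) + t) := by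
      rw [abs_of_neg]; nlinarith
    have hKabs : |(k:ℝ)| = -(k:ℝ) := abs_of_neg (by nlinarith)
    rcases lt_trichotomy p 0 with hp0 | hp0 | hp0
    · -- p < 0
      have hple : (p:ℝ) ≤ -1 := by
        have : p ≤ -1 := by omega
        exact_mod_cast this
      have hY : |2*π*(p:ℝ) + t| = -(2*π*(p:ℝ) + t) := by
        rw [abs_of_neg]; nlinarith
      have hPabs : |(p:ℝ)| = -(p:ℝ) := abs_of_neg (by nlinarith)
      rw [hX, hY, hKabs, hPabs]
      have hE : (1:ℝ) ≤ |(p:ℝ) - (k:ℝ)| := by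
        have h1 : (1:ℤ) ≤ |p - k| := by
          rcases abs_cases (p - k) with ⟨h1,h2⟩|⟨h1,h2⟩ <;> omega
        have h2 : ((p:ℝ) - (k:ℝ)) = ((p - k : ℤ) : ℝ) := by push_cast; ring
        rw [h2, ← Int.cast_abs]; exact_mod_cast h1
      have h3 : -(2*π*(k:ℝ) + t) - -(2*π*(p:ℝ) + t) = 2*π*((p:ℝ) - (k:ℝ)) := by ring
      have h4 : -(k:ℝ) - -(p:ℝ) = (p:ℝ) - (k:ℝ) := by ring
      rw [h3, h4, abs_mul, abs_of_pos (by positivity : (0:ℝ) < 2*π)]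
      nlinarith [mul_le_mul_of_nonneg_right hδ1
        (by positivity : (0:ℝ) ≤ |(p:ℝ) - (k:ℝ)| + 1)]
    · -- p = 0
      subst hp0
      have hY : |2*π*((0:ℤ):ℝ) + t| = |t| := by norm_num
      rw [hX, hY, hKabs]
      have h0 : |((0:ℤ):ℝ)| = 0 := by norm_num
      rw [h0]
      have h5 := le_abs_self (-(2*π*(k:ℝ) + t) - |t|)
      have h6 : |-(k:ℝ) - 0| = -(k:ℝ) := by
        rw [sub_zero, abs_of_pos (by nlinarith)]
      rw [h6]
      nlinarith [mul_le_mul_of_nonneg_right hδ1 (by nlinarith : (0:ℝ) ≤ -(k:ℝ) + 1)]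
    · -- p > 0
      have hpge : (1:ℝ) ≤ (p:ℝ) := by exact_mod_cast hp0
      have hY : |2*π*(p:ℝ) + t| = 2*π*(p:ℝ) + t := by
        rw [abs_of_pos]; nlinarith
      have hPabs : |(p:ℝ)| = (p:ℝ) := abs_of_pos (by nlinarith)
      rw [hX, hY, hKabs, hPabs]
      have h3 : -(2*π*(k:ℝ) + t) - (2*π*(p:ℝ) + t) = -(2*π*(((k+p:ℤ)):ℝ) + 2*t) := by
        push_cast; ring
      have h4 : -(k:ℝ) - (p:ℝ) = -(((k+p:ℤ)):ℝ) := by push_cast; ring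
      rw [h3, h4, abs_neg, abs_neg]
      exact mixed (k+p) t δ hδ hδ1 ht1 ht2 ht0 htpi
  · -- 3 ≤ k
    have hkR3 : (3:ℝ) ≤ (k:ℝ) := by exact_mod_cast hk0
    have hX : |2*π*(k:ℝ) + t| = 2*π*(k:ℝ) + t := by
      rw [abs_of_pos]; nlinarith
    have hKabs : |(k:ℝ)| = (k:ℝ) := abs_of_pos (by nlinarith)
    rcases lt_trichotomy p 0 with hp0 | hp0 | hp0
    · -- p < 0
      have hple : (p:ℝ) ≤ -1 := by
        have : p ≤ -1 := by omega
        exact_mod_cast this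
      have hY : |2*π*(p:ℝ) + t| = -(2*π*(p:ℝ) + t) := by
        rw [abs_of_neg]; nlinarith
      have hPabs : |(p:ℝ)| = -(p:ℝ) := abs_of_neg (by nlinarith)
      rw [hX, hY, hKabs, hPabs]
      have h3 : (2*π*(k:ℝ) + t) - -(2*π*(p:ℝ) + t) = 2*π*(((k+p:ℤ)):ℝ) + 2*t := by
        push_cast; ring
      have h4 : (k:ℝ) - -(p:ℝ) = (((k+p:ℤ)):ℝ) := by push_cast; ring
      rw [h3, h4]
      exact mixed (k+p) t δ hδ hδ1 ht1 ht2 ht0 htpi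
    · -- p = 0
      subst hp0
      have hY : |2*π*((0:ℤ):ℝ) + t| = |t| := by norm_num
      rw [hX, hY, hKabs]
      have h0 : |((0:ℤ):ℝ)| = 0 := by norm_num
      rw [h0]
      have h5 := le_abs_self ((2*π*(k:ℝ) + t) - |t|)
      have h6 : |(k:ℝ) - 0| = (k:ℝ) := by
        rw [sub_zero, abs_of_pos (by nlinarith)]
      rw [h6]
      nlinarith [mul_le_mul_of_nonneg_right hδ1 (by nlinarith : (0:ℝ) ≤ (k:ℝ) + 1)]
    · -- p > 0
      have hpge : (1:ℝ) ≤ (p:ℝ) := by exact_mod_cast hp0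
      have hY : |2*π*(p:ℝ) + t| = 2*π*(p:ℝ) + t := by
        rw [abs_of_pos]; nlinarith
      have hPabs : |(p:ℝ)| = (p:ℝ) := abs_of_pos (by nlinarith)
      rw [hX, hY, hKabs, hPabs]
      have hE : (1:ℝ) ≤ |(k:ℝ) - (p:ℝ)| := by
        have h1 : (1:ℤ) ≤ |k - p| := by
          rcases abs_cases (k - p) with ⟨h1,h2⟩|⟨h1,h2⟩ <;> omega
        have h2 : ((k:ℝ) - (p:ℝ)) = ((k - p : ℤ) : ℝ) := by push_cast; ring
        rw [h2, ← Int.cast_abs]; exact_mod_cast h1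
      have h3 : (2*π*(k:ℝ) + t) - (2*π*(p:ℝ) + t) = 2*π*((k:ℝ) - (p:ℝ)) := by ring
      rw [h3, abs_mul, abs_of_pos (by positivity : (0:ℝ) < 2*π)]
      nlinarith [mul_le_mul_of_nonneg_right hδ1
        (by positivity : (0:ℝ) ≤ |(k:ℝ) - (p:ℝ)| + 1)]

set_option maxHeartbeats 1000000 in
/-- Let `n ≥ 2` be an even integer. There exist a constant `c > 0` and a
positive integer `N ≥ 3` such that for all integers `k, p` with `|k| ≥ N` and `p ≠ k`,
and for all `t ∈ T(k)`, one has
`|(2πk + t)^n − (2πp + t)^n| > c (ln|k|)⁻¹ (||k| − |p|| + 1)(|k| + |p|)^{n−1}`. -/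
theorem stmt_1 (n : ℕ) (hn : 2 ≤ n) (heven : Even n) :
    ∃ c : ℝ, 0 < c ∧ ∃ N : ℕ, 3 ≤ N ∧
      ∀ k p : ℤ, (N : ℤ) ≤ |k| → p ≠ k →
        ∀ t ∈ Tset k,
          |(2*π*(k:ℝ) + t)^n - (2*π*(p:ℝ) + t)^n| >
            c * (Real.log |(k:ℝ)|)⁻¹ * (|(|(k:ℝ)| - |(p:ℝ)|)| + 1)
              * (|(k:ℝ)| + |(p:ℝ)|)^(n-1) := by
  refine ⟨1, one_pos, 3, le_refl 3, ?_⟩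
  intro k p hk hpk t ht
  have hπ := Real.pi_gt_three
  obtain ⟨⟨ht1, ht2⟩, htU⟩ := ht
  have htabs : |t| ≤ 3*π/2 := by rw [abs_le]; constructor <;> nlinarith
  have hkZ : (3:ℤ) ≤ |k| := hk
  have hkR : (3:ℝ) ≤ |(k:ℝ)| := by
    rw [← Int.cast_abs]; exact_mod_cast hkZ
  set L := Real.log |(k:ℝ)| with hLdef
  have hL1 : 1 < L := by
    have h3 : Real.log 3 ≤ L := by
      rw [hLdef]
      exact Real.log_le_log (by norm_num) hkR
    have h4 : 1 < Real.log 3 := by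
      rw [Real.lt_log_iff_exp_lt (by norm_num)]
      calc Real.exp 1 ≤ 2.7182818286 := Real.exp_one_lt_d9.le
      _ < 3 := by norm_num
    linarith
  set δ := L⁻¹ with hδdef
  have hδ : 0 < δ := by rw [hδdef]; exact inv_pos.mpr (by linarith)
  have hδ1 : δ ≤ 1 := by
    rw [hδdef]
    exact inv_le_one_of_one_le₀ hL1.le
  simp only [Set.mem_union, Set.mem_Ioo, not_or, not_and_or, not_lt] at htU
  obtain ⟨hA, hB⟩ := htU
  have ht0 : δ ≤ |t| := by
    rcases hA with h | h
    · exact le_abs.mpr (Or.inr (by linarith))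
    · exact le_abs.mpr (Or.inl h)
  have htpi : δ ≤ |π - t| := by
    rcases hB with h | h
    · exact le_abs.mpr (Or.inl (by linarith))
    · exact le_abs.mpr (Or.inr (by linarith))
  -- abbreviations
  set X := |2*π*(k:ℝ) + t| with hXdef
  set Y := |2*π*(p:ℝ) + t| with hYdef
  set D := |(|(k:ℝ)| - |(p:ℝ)|)| + 1 with hDdef
  set K := |(k:ℝ)| + |(p:ℝ)| with hKdef
  have hK3 : (3:ℝ) ≤ K := by
    have := abs_nonneg (p:ℝ); rw [hKdef]; linarith
  have hDpos : 0 < D := by rw [hDdef]; positivity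
  have hdist : δ * D ≤ |X - Y| := dist_lb k p hkZ hpk t δ hδ hδ1 ht1 ht2 ht0 htpi
  have hXlb := abs_lb k t
  have hYlb := abs_lb p t
  have hM : π/2 * K ≤ max X Y := by
    rcases le_total (|(p:ℝ)|) (|(k:ℝ)|) with h | h
    · have h1 : π/2 * K ≤ X := by
        rw [hXdef, hKdef] at *
        nlinarith
      exact h1.trans (le_max_left _ _)
    · have h1 : π/2 * K ≤ Y := by
        have hpR : (3:ℝ) ≤ |(p:ℝ)| := by linarith
        rw [hYdef, hKdef] at *
        nlinarith
      exact h1.trans (le_max_right _ _)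
  have hn1 : 1 ≤ n := by omega
  have hstep : |X - Y| * (max X Y)^(n-1) ≤ |X^n - Y^n| := by
    rcases le_total Y X with h | h
    · have h2 := aux_pow X Y n hn1 (abs_nonneg _) h
      rw [abs_of_nonneg (sub_nonneg.mpr h), max_eq_left h]
      calc (X-Y)*X^(n-1) ≤ X^n - Y^n := h2
      _ ≤ |X^n - Y^n| := le_abs_self _
    · have h2 := aux_pow Y X n hn1 (abs_nonneg _) h
      rw [abs_sub_comm X Y, abs_sub_comm (X^n) (Y^n), max_comm,
        abs_of_nonneg (sub_nonneg.mpr h), max_eq_left h]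
      calc (Y-X)*Y^(n-1) ≤ Y^n - X^n := h2
      _ ≤ |Y^n - X^n| := le_abs_self _
  -- rewrite even powers
  have habn : |(2*π*(k:ℝ) + t)^n - (2*π*(p:ℝ) + t)^n| = |X^n - Y^n| := by
    rw [hXdef, hYdef, heven.pow_abs, heven.pow_abs]
  rw [habn]
  have hchain : δ * D * (π/2 * K)^(n-1) ≤ |X^n - Y^n| := by
    calc δ * D * (π/2 * K)^(n-1)
        ≤ |X - Y| * (max X Y)^(n-1) := by
          apply mul_le_mul hdist (pow_le_pow_left₀ (by positivity) hM _)
            (by positivity) (abs_nonneg _)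
      _ ≤ |X^n - Y^n| := hstep
  have hpow : (π/2 : ℝ) ≤ (π/2)^(n-1) := le_self_pow₀ (by nlinarith) (by omega)
  have hpos : 0 < δ * D * K^(n-1) := by positivity
  calc 1 * δ * D * K^(n-1) = δ * D * K^(n-1) := by ring
    _ < (3/2) * (δ * D * K^(n-1)) := by nlinarith
    _ ≤ (π/2)^(n-1) * (δ * D * K^(n-1)) := by
        apply mul_le_mul_of_nonneg_right _ hpos.le
        nlinarith
    _ = δ * D * (π/2 * K)^(n-1) := by rw [mul_pow]; ring
    _ ≤ |X^n - Y^n| := hchain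
end

section
/- Let n ≥ 2 be an even integer. There exist a constant c > 0 and a positive integer N ≥ 3 such that for all integers k, p with |k| ≥ N and p ∉ {k, −(k+1)}, and for all real t with |t − π| < 1/ln|k|, one has |(2πk + t)^n − (2πp + t)^n| > c (ln|k|)^{−1} (||k| − |p|| + 1)(|k| + |p|)^{n−1}. -/
open Real

set_option maxHeartbeats 1000000

lemma aux_int_stmt3 (k p : ℤ) (hk : 3 ≤ |k|) (h1 : p ≠ k) (h2 : p ≠ -(k+1)) :
    2 * ((|k|+|p|) * (|(|k| - |p|)| + 1)) ≤ 9 * (|k-p| * |k+p+1|) := by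
  rcases le_total (|k-p|) (|k+p+1|) with h | h
  · have hA : |k| + |p| - 1 ≤ |k+p+1| := by simp only [Int.abs_eq_natAbs] at *; omega
    have hB : |(|k| - |p|)| + 1 ≤ 2 * |k-p| := by simp only [Int.abs_eq_natAbs] at *; omega
    nlinarith [abs_nonneg (k-p), abs_nonneg (k+p+1), abs_nonneg (|k|-|p|), abs_nonneg p]
  · have hA : |k| + |p| - 1 ≤ |k-p| := by simp only [Int.abs_eq_natAbs] at *; omega
    have hB : |(|k| - |p|)| + 1 ≤ 3 * |k+p+1| := by simp only [Int.abs_eq_natAbs] at *; omega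
    nlinarith [abs_nonneg (k-p), abs_nonneg (k+p+1), abs_nonneg (|k|-|p|), abs_nonneg p]

lemma abs_lb_stmt3 (x y : ℝ) : |x| - |y| ≤ |x + y| := by
  have h := abs_add_le (x + y) (-y)
  rw [abs_neg] at h
  simp only [add_neg_cancel_right] at h
  linarith

/-- Let `n ≥ 2` be an even integer. There exist a constant `c > 0` and a
positive integer `N ≥ 3` such that for all integers `k, p` with `|k| ≥ N` and
`p ∉ {k, −(k+1)}`, and for all real `t` with `|t − π| < 1/ln|k|`, one has
`|(2πk + t)^n − (2πp + t)^n| > c (ln|k|)⁻¹ (||k| − |p|| + 1)(|k| + |p|)^{n−1}`. -/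
theorem stmt_3 (n : ℕ) (hn : 2 ≤ n) (heven : Even n) :
    ∃ c : ℝ, 0 < c ∧ ∃ N : ℕ, 3 ≤ N ∧
      ∀ k p : ℤ, (N : ℤ) ≤ |k| → p ∉ ({k, -(k+1)} : Set ℤ) →
        ∀ t : ℝ, |t - π| < (Real.log |(k:ℝ)|)⁻¹ →
          |(2*π*(k:ℝ) + t)^n - (2*π*(p:ℝ) + t)^n| >
            c * (Real.log |(k:ℝ)|)⁻¹ * (|(|(k:ℝ)| - |(p:ℝ)|)| + 1)
              * (|(k:ℝ)| + |(p:ℝ)|)^(n-1) := by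
  obtain ⟨m, hm⟩ := heven
  have hm1 : 1 ≤ m := by omega
  refine ⟨1, one_pos, 3, le_rfl, ?_⟩
  intro k p hk hp t ht
  simp only [Set.mem_insert_iff, Set.mem_singleton_iff, not_or] at hp
  obtain ⟨hp1, hp2⟩ := hp
  have hk3 : (3:ℤ) ≤ |k| := by exact_mod_cast hk
  have hπ : (3:ℝ) < π := Real.pi_gt_three
  have hkR : (3:ℝ) ≤ |(k:ℝ)| := by
    rw [← Int.cast_abs]; exact_mod_cast hk3
  have hlog : 1 < Real.log |(k:ℝ)| := by
    rw [Real.lt_log_iff_exp_lt (by linarith)]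
    calc Real.exp 1 < 2.7182818286 := Real.exp_one_lt_d9
      _ ≤ |(k:ℝ)| := by linarith
  have hts : |t - π| < 1 := ht.trans_le (inv_le_one_of_one_le₀ hlog.le)
  -- abbreviations (opaque)
  obtain ⟨a, ha⟩ : ∃ a : ℝ, a = 2*π*(k:ℝ) + t := ⟨_, rfl⟩
  obtain ⟨b, hb⟩ : ∃ b : ℝ, b = 2*π*(p:ℝ) + t := ⟨_, rfl⟩
  obtain ⟨K, hK⟩ : ∃ K : ℝ, K = |(k:ℝ)| + |(p:ℝ)| := ⟨_, rfl⟩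
  obtain ⟨M, hM⟩ : ∃ M : ℝ, M = |(|(k:ℝ)| - |(p:ℝ)|)| := ⟨_, rfl⟩
  obtain ⟨L, hL⟩ : ∃ L : ℝ, L = Real.log |(k:ℝ)| := ⟨_, rfl⟩
  rw [← hL] at hlog
  set D := |(k:ℝ) - (p:ℝ)| with hDdef
  set E := |(k:ℝ) + (p:ℝ) + 1| with hEdef
  rw [← ha, ← hb, ← hK, ← hM, ← hL]
  have hM0 : 0 ≤ M := hM ▸ abs_nonneg _
  have hD0 : 0 ≤ D := abs_nonneg _
  have hE0 : 0 ≤ E := abs_nonneg _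
  have hK3 : (3:ℝ) ≤ K := by
    have := abs_nonneg ((p:ℝ)); rw [hK]; linarith
  have hDE : 2 * (K * (M + 1)) ≤ 9 * (D * E) := by
    have h := aux_int_stmt3 k p hk3 hp1 hp2
    have h' : (2:ℝ) * ((|(k:ℝ)|+|(p:ℝ)|) * (|(|(k:ℝ)| - |(p:ℝ)|)| + 1))
        ≤ 9 * (|(k:ℝ)-(p:ℝ)| * |(k:ℝ)+(p:ℝ)+1|) := by exact_mod_cast h
    rw [hK, hM]; exact h'
  have hE1 : (1:ℝ) ≤ E := by
    have h1 : (1:ℤ) ≤ |k+p+1| := by simp only [Int.abs_eq_natAbs]; omega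
    have h' : (1:ℝ) ≤ |(k:ℝ)+(p:ℝ)+1| := by exact_mod_cast h1
    exact h'
  have habd : |a - b| = 2*π*D := by
    have h1 : a - b = 2*π*((k:ℝ) - (p:ℝ)) := by rw [ha, hb]; ring
    rw [h1, abs_mul, abs_of_nonneg (by positivity : (0:ℝ) ≤ 2*π)]
  have habe : π * E ≤ |a + b| := by
    have h1 : a + b = 2*π*((k:ℝ) + (p:ℝ) + 1) + 2*(t - π) := by rw [ha, hb]; ring
    have h2 := abs_lb_stmt3 (2*π*((k:ℝ) + (p:ℝ) + 1)) (2*(t - π))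
    rw [← h1] at h2
    have h3 : |2*π*((k:ℝ) + (p:ℝ) + 1)| = 2*π*E := by
      rw [abs_mul, abs_of_nonneg (by positivity : (0:ℝ) ≤ 2*π)]
    have h4 : |2*(t - π)| ≤ 2 := by
      rw [abs_mul, abs_of_nonneg (by norm_num : (0:ℝ) ≤ 2)]
      nlinarith [hts, abs_nonneg (t - π)]
    have h5 : π * 1 ≤ π * E := mul_le_mul_of_nonneg_left hE1 Real.pi_pos.le
    linarith [h2, h4, h5, hπ]
  have hta : |t| ≤ π + 1 := by
    have := abs_sub_abs_le_abs_sub t π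
    rw [abs_of_pos Real.pi_pos] at this
    linarith [hts]
  have haK : π * K ≤ |a| + |b| := by
    have h1 : 2*π*|(k:ℝ)| - |t| ≤ |a| := by
      have h := abs_lb_stmt3 (2*π*(k:ℝ)) t
      rw [← ha] at h
      rw [abs_mul, abs_of_nonneg (by positivity : (0:ℝ) ≤ 2*π)] at h
      linarith
    have h2 : 2*π*|(p:ℝ)| - |t| ≤ |b| := by
      have h := abs_lb_stmt3 (2*π*(p:ℝ)) t
      rw [← hb] at h
      rw [abs_mul, abs_of_nonneg (by positivity : (0:ℝ) ≤ 2*π)] at h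
      linarith
    have hb0 : 0 ≤ |b| := abs_nonneg b
    have hpcase : |(p:ℝ)| ≤ 1 ∨ 2 ≤ |(p:ℝ)| := by
      have h : (|p|:ℤ) ≤ 1 ∨ (2:ℤ) ≤ |p| := by omega
      rcases h with h | h
      · left; rw [← Int.cast_abs]; exact_mod_cast h
      · right; rw [← Int.cast_abs]; exact_mod_cast h
    rw [hK]
    have e2 : π * 3 ≤ π * |(k:ℝ)| := mul_le_mul_of_nonneg_left hkR Real.pi_pos.le
    rcases hpcase with h | h
    · have e1 : π * |(p:ℝ)| ≤ π * 1 := mul_le_mul_of_nonneg_left h Real.pi_pos.le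
      linarith [h1, hta, hπ, hb0, e1, e2]
    · have e3 : π * 2 ≤ π * |(p:ℝ)| := mul_le_mul_of_nonneg_left h Real.pi_pos.le
      linarith [h1, h2, hta, hπ, e2, e3]
  obtain ⟨S, hS⟩ : ∃ S : ℝ, S = ∑ i ∈ Finset.range m, (a^2)^i * (b^2)^(m-1-i) := ⟨_, rfl⟩
  have hfac : a^n - b^n = S * (a^2 - b^2) := by
    rw [hS, geom_sum₂_mul, ← pow_mul, ← pow_mul]
    have h2m : 2 * m = n := by omega
    rw [h2m]
  have hS0 : 0 ≤ S := hS ▸ Finset.sum_nonneg fun i _ => by positivity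
  have hSa : (a^2)^(m-1) ≤ S := by
    rw [hS]
    have h := Finset.single_le_sum (f := fun i => (a^2)^i * (b^2)^(m-1-i))
      (fun i _ => by positivity) (Finset.mem_range.2 (by omega : m - 1 < m))
    simpa using h
  have hSb : (b^2)^(m-1) ≤ S := by
    rw [hS]
    have h := Finset.single_le_sum (f := fun i => (a^2)^i * (b^2)^(m-1-i))
      (fun i _ => by positivity) (Finset.mem_range.2 (by omega : 0 < m))
    simpa using h
  have hS2 : K^(n-2) ≤ S := by
    have hKmax : K ≤ max |a| |b| := by
      have e4 : 3 * K ≤ π * K := mul_le_mul_of_nonneg_right hπ.le (by linarith)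
      rcases max_cases |a| |b| with ⟨h, h'⟩ | ⟨h, h'⟩ <;> rw [h] <;>
        linarith [haK, abs_nonneg a, abs_nonneg b]
    rcases le_total |a| |b| with h | h
    · calc K^(n-2) ≤ |b|^(n-2) :=
            pow_le_pow_left₀ (by linarith) (by rw [max_eq_right h] at hKmax; exact hKmax) _
        _ = (b^2)^(m-1) := by rw [show n - 2 = 2*(m-1) by omega, pow_mul, sq_abs]
        _ ≤ S := hSb
    · calc K^(n-2) ≤ |a|^(n-2) :=
            pow_le_pow_left₀ (by linarith) (by rw [max_eq_left h] at hKmax; exact hKmax) _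
        _ = (a^2)^(m-1) := by rw [show n - 2 = 2*(m-1) by omega, pow_mul, sq_abs]
        _ ≤ S := hSa
  have h2 : K * (M + 1) ≤ |a + b| * |a - b| := by
    have hmul : (π * E) * (2*π*D) ≤ |a + b| * |a - b| := by
      rw [habd]
      exact mul_le_mul_of_nonneg_right habe (by positivity)
    have hde0 : (0:ℝ) ≤ D * E := mul_nonneg hD0 hE0
    have h9 : 9 * (D * E) ≤ π * π * (D * E) := by
      have : (9:ℝ) ≤ π * π := by nlinarith [hπ]
      exact mul_le_mul_of_nonneg_right this hde0
    have heq : (π * E) * (2*π*D) = 2 * (π * π) * (D * E) := by ring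
    have hkm0 : (0:ℝ) ≤ K * (M + 1) :=
      mul_nonneg (by linarith) (by linarith)
    linarith [hDE, hmul, h9, heq ▸ hmul, hde0, hkm0]
  have hmain : (M + 1) * K^(n-1) ≤ |a^n - b^n| := by
    have habs : |a^n - b^n| = S * (|a + b| * |a - b|) := by
      rw [hfac, abs_mul, abs_of_nonneg hS0,
        show a^2 - b^2 = (a+b)*(a-b) by ring, abs_mul]
    rw [habs]
    calc (M + 1) * K^(n-1) = K^(n-2) * (K * (M + 1)) := by
          rw [show n - 1 = (n-2) + 1 by omega, pow_succ]; ring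
      _ ≤ S * (|a + b| * |a - b|) :=
          mul_le_mul hS2 h2 (mul_nonneg (by linarith) (by linarith)) hS0
  have hKpow : (0:ℝ) < K^(n-1) := pow_pos (by linarith) _
  have hinv1 : L⁻¹ < 1 := by
    rw [inv_lt_one_iff₀]; right; exact hlog
  have hP : (0:ℝ) < (M + 1) * K^(n-1) :=
    mul_pos (by linarith) hKpow
  calc 1 * L⁻¹ * (M + 1) * K^(n-1) = L⁻¹ * ((M + 1) * K^(n-1)) := by ring
    _ < 1 * ((M + 1) * K^(n-1)) := mul_lt_mul_of_pos_right hinv1 hP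
    _ = (M + 1) * K^(n-1) := one_mul _
    _ ≤ |a^n - b^n| := hmain
end

section
/- Let n ≥ 2, m ≥ 1 be integers and c₁ > 0. There exist a constant c > 0 and a positive integer N ≥ 3 such that: for every integer k with |k| ≥ N, every t ∈ [−π/2, 3π/2) (with t arbitrary in [−π/2, 3π/2) if n is odd), every λ ∈ ℂ with |λ − (2πk + t)^n| ≤ c₁ |k|^{n−1−1/(2m)}, and every integer p ∉ A(k,n,t), one has |λ − (2πp + t)^n| > c (ln|k|)^{−1} (||k| − |p|| + 1)(|k| + |p|)^{n−1}. -/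
open Real

open Classical in
/-- The set `A(k,n,t) ⊆ ℤ`: equal to `{k}` if `n` is odd, or if `n` is even and
`t ∈ T(k)`; equal to `{k, −k}` if `n` is even and `|t| < 1/ln|k|`; and equal to
`{k, −(k+1)}` if `n` is even and `|t − π| < 1/ln|k|`. -/
noncomputable def Aset (n : ℕ) (k : ℤ) (t : ℝ) : Set ℤ :=
  if Odd n then {k}
  else if |t| < (Real.log |(k:ℝ)|)⁻¹ then {k, -k}
  else if |t - π| < (Real.log |(k:ℝ)|)⁻¹ then {k, -(k+1)}
  else {k}


/-!
Write `a = 2πk + t` and `b = 2πp + t`. Since `‖λ - bⁿ‖ ≥ |aⁿ - bⁿ| - ‖λ - aⁿ‖` and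
`log |k| = o(|k| ^ (1/(2m)))`, the perturbation `c₁ |k| ^ (n - 1 - 1/(2m))` is eventually below
`(4 log |k|)⁻¹ |k| ^ (n - 1)`, so it suffices to show
`|aⁿ - bⁿ| ≥ (2 log |k|)⁻¹ (||k| - |p|| + 1) (|k| + |p|) ^ (n - 1)`.

Now `|aⁿ - bⁿ| ≥ ||a| - |b|| · max(|a|, |b|) ^ (n - 1)` and `max(|a|, |b|) ≥ |k| + |p|`, so
everything comes down to `||a| - |b||`. For `a, b` of the same sign this is `|a - b| = 2π|k - p|`;
otherwise it is `|a + b| = |2π(k + p) + 2t|`, which is of order `|k + p| + 1` unless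
`k + p ∈ {0, -1}`, where it equals `2|t|` or `2|t - π|`. These two values of `p` are exactly the
exceptional ones in `A(k, n, t)` for even `n`; for odd `n` and opposite signs,
`|aⁿ - bⁿ| = |a|ⁿ + |b|ⁿ` is large anyway.
-/

section PowerDifference

variable {a b : ℝ}

lemma sub_mul_pow_le_pow_succ_sub_pow_succ {x y : ℝ} (hy : 0 ≤ y) (hyx : y ≤ x) (n : ℕ) :
    (x - y) * x ^ n ≤ x ^ (n + 1) - y ^ (n + 1) := by
  have : y * y ^ n ≤ y * x ^ n := mul_le_mul_of_nonneg_left (pow_le_pow_left₀ hy hyx n) hy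
  rw [pow_succ', pow_succ']
  linarith

lemma abs_abs_sub_abs_mul_max_pow_le (a b : ℝ) (n : ℕ) :
    |(|a| - |b|)| * max |a| |b| ^ n ≤ |a ^ (n + 1) - b ^ (n + 1)| := by
  wlog h : |b| ≤ |a| generalizing a b
  · simpa only [abs_sub_comm, max_comm] using this b a (le_of_not_ge h)
  calc |(|a| - |b|)| * max |a| |b| ^ n = (|a| - |b|) * |a| ^ n := by
        rw [abs_of_nonneg (sub_nonneg.2 h), max_eq_left h]
    _ ≤ |a| ^ (n + 1) - |b| ^ (n + 1) := sub_mul_pow_le_pow_succ_sub_pow_succ (abs_nonneg b) h n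
    _ ≤ |a ^ (n + 1) - b ^ (n + 1)| := by
        simpa only [abs_pow] using abs_sub_abs_le_abs_sub (a ^ (n + 1)) (b ^ (n + 1))

lemma Odd.abs_pow_sub_pow_of_mul_nonpos {n : ℕ} (hn : Odd n) (h : a * b ≤ 0) :
    |a ^ n - b ^ n| = |a| ^ n + |b| ^ n := by
  wlog hab : 0 ≤ a ∧ b ≤ 0 generalizing a b
  · rw [abs_sub_comm, add_comm]
    exact this (by rwa [mul_comm]) ((mul_nonpos_iff.1 h).resolve_left hab).symm
  rw [abs_of_nonneg hab.1, abs_of_nonpos hab.2, hn.neg_pow, ← sub_eq_add_neg]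
  exact abs_of_nonneg (sub_nonneg.2 ((hn.pow_nonpos_iff.2 hab.2).trans (pow_nonneg hab.1 n)))

lemma abs_abs_sub_abs_eq_abs_sub (h : 0 ≤ a * b) : |(|a| - |b|)| = |a - b| := by
  rcases mul_nonneg_iff.1 h with ⟨ha, hb⟩ | ⟨ha, hb⟩
  · rw [abs_of_nonneg ha, abs_of_nonneg hb]
  · rw [abs_of_nonpos ha, abs_of_nonpos hb, neg_sub_neg, abs_sub_comm]

lemma abs_abs_sub_abs_eq_abs_add (h : a * b ≤ 0) : |(|a| - |b|)| = |a + b| := by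
  rcases mul_nonpos_iff.1 h with ⟨ha, hb⟩ | ⟨ha, hb⟩
  · rw [abs_of_nonneg ha, abs_of_nonpos hb, sub_neg_eq_add]
  · rw [abs_of_nonpos ha, abs_of_nonneg hb, ← neg_add', abs_neg]

end PowerDifference

lemma inv_log_mem_Ioc_of_three_le {x : ℝ} (hx : 3 ≤ x) : (log x)⁻¹ ∈ Set.Ioc 0 1 := by
  have h : 1 ≤ log x := by
    rw [le_log_iff_exp_le (by linarith)]
    linarith [exp_one_lt_d9]
  exact ⟨inv_pos.2 (by linarith), inv_le_one_of_one_le₀ h⟩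

section Separation

variable {n : ℕ} {k p : ℤ} {t : ℝ}

lemma two_pi_mul_abs_sub_le_abs_add (k : ℤ) (ht : t ∈ Set.Ico (-(π/2)) (3*π/2)) :
    2 * π * |(k:ℝ)| - 3 * π / 2 ≤ |2 * π * k + t| := by
  have ht' : |t| ≤ 3 * π / 2 := abs_le.2 ⟨by linarith [ht.1, pi_pos], ht.2.le⟩
  have h := abs_add_le (2 * π * k + t) (-t)
  rw [add_neg_cancel_right, abs_neg, abs_mul, abs_of_pos two_pi_pos] at h
  linarith

lemma abs_add_abs_le_max_abs (hk : 3 ≤ |(k:ℝ)|) (ht : t ∈ Set.Ico (-(π/2)) (3*π/2)) :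
    |(k:ℝ)| + |(p:ℝ)| ≤ max |2 * π * k + t| |2 * π * p + t| := by
  have hka := two_pi_mul_abs_sub_le_abs_add k ht
  have hpb := two_pi_mul_abs_sub_le_abs_add p ht
  have hS : (π - 1) * 3 ≤ (π - 1) * (|(k:ℝ)| + |(p:ℝ)|) :=
    mul_le_mul_of_nonneg_left (by linarith [abs_nonneg (p:ℝ)]) (by linarith [pi_gt_three])
  linarith [le_max_left |2 * π * k + t| |2 * π * p + t|,
    le_max_right |2 * π * k + t| |2 * π * p + t|, pi_gt_three]

lemma abs_add_one_le_abs_two_pi_mul_add (ht : t ∈ Set.Ico (-(π/2)) (3*π/2)) {j : ℤ}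
    (h₀ : j ≠ 0) (h₁ : j ≠ -1) : (|(j:ℝ)| + 1) / 2 ≤ |2 * π * j + 2 * t| := by
  obtain ⟨ht₁, ht₂⟩ := ht
  rcases (by omega : 1 ≤ j ∨ j ≤ -2) with hj | hj
  · have hj' : (1:ℝ) ≤ j := by exact_mod_cast hj
    have := mul_le_mul_of_nonneg_right pi_gt_three.le (by linarith : (0:ℝ) ≤ 2 * j - 1)
    rw [abs_of_nonneg (by linarith)]
    linarith [le_abs_self (2 * π * j + 2 * t), pi_gt_three]
  · have hj' : (j:ℝ) ≤ -2 := by exact_mod_cast hj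
    have := mul_le_mul_of_nonneg_right pi_gt_three.le (by linarith : (0:ℝ) ≤ -2 * j - 3)
    rw [abs_of_nonpos (by linarith)]
    linarith [neg_abs_le (2 * π * j + 2 * t), pi_gt_three]

lemma mem_Aset_self (n : ℕ) (k : ℤ) (t : ℝ) : k ∈ Aset n k t := by
  unfold Aset
  split_ifs <;> simp

lemma inv_log_le_abs_of_neg_notMem_Aset (hn : Even n) (hp : -k ∉ Aset n k t) :
    (log |(k:ℝ)|)⁻¹ ≤ |t| := by
  rw [Aset, if_neg (Nat.not_odd_iff_even.2 hn)] at hp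
  split_ifs at hp with h
  · simp at hp
  all_goals exact not_lt.1 h

lemma inv_log_le_abs_sub_pi_of_notMem_Aset (hn : Even n) (hk : (log |(k:ℝ)|)⁻¹ ≤ 1)
    (hp : -(k + 1) ∉ Aset n k t) : (log |(k:ℝ)|)⁻¹ ≤ |t - π| := by
  rw [Aset, if_neg (Nat.not_odd_iff_even.2 hn)] at hp
  split_ifs at hp with h h'
  · linarith [neg_abs_le (t - π), le_abs_self t, pi_gt_three]
  · simp at hp
  · exact not_lt.1 h'

lemma inv_log_mul_le_abs_add_of_even (hn : Even n) (hk : 3 ≤ |(k:ℝ)|)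
    (ht : t ∈ Set.Ico (-(π/2)) (3*π/2)) (hp : p ∉ Aset n k t) :
    (log |(k:ℝ)|)⁻¹ * (|(|(k:ℝ)| - |(p:ℝ)|)| + 1) / 2
      ≤ |(2 * π * k + t) + (2 * π * p + t)| := by
  obtain ⟨hL₀, hL₁⟩ := inv_log_mem_Ioc_of_three_le hk
  have hkp : |(|(k:ℝ)| - |(p:ℝ)|)| ≤ |(k:ℝ) + p| := by
    simpa using abs_abs_sub_abs_le_abs_sub (k:ℝ) (-p)
  by_cases h₀ : k + p = 0
  · obtain rfl : p = -k := by omega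
    have hD : |(|(k:ℝ)| - |((-k : ℤ) : ℝ)|)| = 0 := by push_cast; simp
    have hsum : (2 * π * k + t) + (2 * π * (-k : ℤ) + t) = 2 * t := by push_cast; ring
    rw [hD, hsum, abs_mul, abs_two]
    linarith [inv_log_le_abs_of_neg_notMem_Aset hn hp]
  by_cases h₁ : k + p = -1
  · obtain rfl : p = -(k + 1) := by omega
    have hj : (k:ℝ) + ((-(k + 1) : ℤ) : ℝ) = -1 := by push_cast; ring
    rw [hj, abs_neg, abs_one] at hkp
    have hsum : (2 * π * k + t) + (2 * π * (-(k + 1) : ℤ) + t) = 2 * (t - π) := by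
      push_cast; ring
    rw [hsum, abs_mul, abs_two]
    linarith [inv_log_le_abs_sub_pi_of_notMem_Aset hn hL₁ hp,
      mul_le_mul_of_nonneg_left hkp hL₀.le]
  have hsum : (2 * π * k + t) + (2 * π * p + t) = 2 * π * (k + p : ℤ) + 2 * t := by
    push_cast; ring
  rw [hsum]
  refine le_trans ?_ (abs_add_one_le_abs_two_pi_mul_add ht h₀ h₁)
  push_cast
  linarith [mul_le_of_le_one_left (by positivity : 0 ≤ |(|(k:ℝ)| - |(p:ℝ)|)| + 1) hL₁]

lemma inv_log_mul_le_abs_abs_sub_abs (hk : 3 ≤ |(k:ℝ)|) (ht : t ∈ Set.Ico (-(π/2)) (3*π/2))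
    (hp : p ∉ Aset n k t) (h : Even n ∨ 0 ≤ (2 * π * k + t) * (2 * π * p + t)) :
    (log |(k:ℝ)|)⁻¹ * (|(|(k:ℝ)| - |(p:ℝ)|)| + 1) / 2
      ≤ |(|2 * π * k + t| - |2 * π * p + t|)| := by
  rcases le_or_gt 0 ((2 * π * k + t) * (2 * π * p + t)) with hab | hab
  · rw [abs_abs_sub_abs_eq_abs_sub hab]
    have hL₁ := (inv_log_mem_Ioc_of_three_le hk).2
    have hkp : (1:ℝ) ≤ |(k:ℝ) - p| := by
      have : p ≠ k := fun h ↦ hp (h ▸ mem_Aset_self n k t)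
      exact_mod_cast Int.one_le_abs (sub_ne_zero.2 this.symm)
    have hsub : (2 * π * k + t) - (2 * π * p + t) = 2 * π * (k - p) := by ring
    rw [hsub, abs_mul, abs_of_pos two_pi_pos]
    linarith [abs_abs_sub_abs_le_abs_sub (k:ℝ) p,
      mul_le_of_le_one_left (by positivity : 0 ≤ |(|(k:ℝ)| - |(p:ℝ)|)| + 1) hL₁,
      mul_le_mul_of_nonneg_right pi_gt_three.le (abs_nonneg ((k:ℝ) - p))]
  · rw [abs_abs_sub_abs_eq_abs_add hab.le]
    exact inv_log_mul_le_abs_add_of_even (h.resolve_right hab.not_ge) hk ht hp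

lemma inv_log_mul_le_abs_pow_sub_pow (hn : n ≠ 0) (hk : 3 ≤ |(k:ℝ)|)
    (ht : t ∈ Set.Ico (-(π/2)) (3*π/2)) (hp : p ∉ Aset n k t) :
    (log |(k:ℝ)|)⁻¹ * (|(|(k:ℝ)| - |(p:ℝ)|)| + 1) * (|(k:ℝ)| + |(p:ℝ)|) ^ (n - 1) / 2
      ≤ |(2 * π * k + t) ^ n - (2 * π * p + t) ^ n| := by
  obtain ⟨n, rfl⟩ : ∃ m, n = m + 1 := ⟨n - 1, by omega⟩
  set a := 2 * π * k + t
  set b := 2 * π * p + t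
  have hSM : |(k:ℝ)| + |(p:ℝ)| ≤ max |a| |b| := abs_add_abs_le_max_abs hk ht
  rw [Nat.add_sub_cancel]
  by_cases hodd : Odd (n + 1) ∧ a * b < 0
  · have hL₁ := (inv_log_mem_Ioc_of_three_le hk).2
    have hD : |(|(k:ℝ)| - |(p:ℝ)|)| ≤ |(k:ℝ)| + |(p:ℝ)| :=
      abs_le.2 ⟨by linarith [abs_nonneg (p:ℝ)], by linarith [abs_nonneg (p:ℝ)]⟩
    have hLD : (log |(k:ℝ)|)⁻¹ * (|(|(k:ℝ)| - |(p:ℝ)|)| + 1) / 2 ≤ max |a| |b| := by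
      have := mul_le_of_le_one_left (by positivity : 0 ≤ |(|(k:ℝ)| - |(p:ℝ)|)| + 1) hL₁
      linarith [abs_nonneg (p:ℝ)]
    calc _ = (log |(k:ℝ)|)⁻¹ * (|(|(k:ℝ)| - |(p:ℝ)|)| + 1) / 2 * (|(k:ℝ)| + |(p:ℝ)|) ^ n := by
          ring
      _ ≤ max |a| |b| * max |a| |b| ^ n := by gcongr
      _ ≤ |a| ^ (n + 1) + |b| ^ (n + 1) := by
          rw [← pow_succ']
          rcases max_choice |a| |b| with h | h <;> rw [h] <;>
            linarith [pow_nonneg (abs_nonneg a) (n + 1), pow_nonneg (abs_nonneg b) (n + 1)]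
      _ = |a ^ (n + 1) - b ^ (n + 1)| := (hodd.1.abs_pow_sub_pow_of_mul_nonpos hodd.2.le).symm
  · have hsep := inv_log_mul_le_abs_abs_sub_abs hk ht hp (by
      rcases Nat.even_or_odd (n + 1) with he | ho
      exacts [.inl he, .inr (not_lt.1 fun h ↦ hodd ⟨ho, h⟩)])
    calc _ = (log |(k:ℝ)|)⁻¹ * (|(|(k:ℝ)| - |(p:ℝ)|)| + 1) / 2 * (|(k:ℝ)| + |(p:ℝ)|) ^ n := by
          ring
      _ ≤ |(|a| - |b|)| * max |a| |b| ^ n := by gcongr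
      _ ≤ |a ^ (n + 1) - b ^ (n + 1)| := abs_abs_sub_abs_mul_max_pow_le a b n

end Separation

lemma eventually_mul_log_le_mul_rpow (c : ℝ) {r ε : ℝ} (hr : 0 < r) (hε : 0 < ε) :
    ∀ᶠ x in Filter.atTop, c * log x ≤ ε * x ^ r := by
  filter_upwards [((isLittleO_log_rpow_atTop hr).const_mul_left c).bound hε,
    Filter.eventually_ge_atTop 0] with x hx hx₀
  rw [Real.norm_eq_abs, norm_of_nonneg (rpow_nonneg hx₀ r)] at hx
  exact (le_abs_self _).trans hx

lemma mul_rpow_sub_le_of_mul_log_le {c ε x r s : ℝ} (hx : 1 < x) (h : c * log x ≤ ε * x ^ r) :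
    c * x ^ (s - r) ≤ ε * (log x)⁻¹ * x ^ s := by
  have hlog : 0 < log x := log_pos hx
  have hxr : 0 < x ^ r := rpow_pos_of_pos (by linarith) r
  rw [rpow_sub (by linarith)]
  calc c * (x ^ s / x ^ r) = c / x ^ r * x ^ s := by ring
    _ ≤ ε / log x * x ^ s := by
        refine mul_le_mul_of_nonneg_right ?_ (rpow_nonneg (by linarith) s)
        rwa [div_le_div_iff₀ hxr hlog]
    _ = ε * (log x)⁻¹ * x ^ s := by ring

lemma abs_sub_le_norm_sub_add_norm_sub (x y : ℝ) (z : ℂ) : |x - y| ≤ ‖z - x‖ + ‖z - y‖ := by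
  rw [← Real.norm_eq_abs, ← Complex.norm_real, Complex.ofReal_sub, norm_sub_rev z]
  exact norm_sub_le_norm_sub_add_norm_sub _ _ _

theorem stmt_4_general (n m : ℕ) (hn : 2 ≤ n) (hm : 1 ≤ m) (c₁ : ℝ) :
    ∃ c : ℝ, 0 < c ∧ ∃ N : ℕ, 3 ≤ N ∧
      ∀ k : ℤ, (N : ℤ) ≤ |k| →
        ∀ t ∈ Set.Ico (-(π/2)) (3*π/2),
          ∀ lam : ℂ,
            ‖lam - ((2*π*(k:ℝ) + t : ℝ) : ℂ)^n‖
              ≤ c₁ * |(k:ℝ)| ^ ((n:ℝ) - 1 - 1/(2*(m:ℝ))) →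
            ∀ p : ℤ, p ∉ Aset n k t →
              ‖lam - ((2*π*(p:ℝ) + t : ℝ) : ℂ)^n‖ >
                c * (Real.log |(k:ℝ)|)⁻¹ * (|(|(k:ℝ)| - |(p:ℝ)|)| + 1)
                  * (|(k:ℝ)| + |(p:ℝ)|)^(n-1) := by
  have hr : (0:ℝ) < 1 / (2 * m) := by
    have : (1:ℝ) ≤ m := by exact_mod_cast hm
    positivity
  obtain ⟨x₀, hx₀⟩ :=
    Filter.eventually_atTop.1 (eventually_mul_log_le_mul_rpow c₁ hr (by norm_num : (0:ℝ) < 1/4))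
  refine ⟨1/8, by norm_num, max 3 ⌈x₀⌉₊, le_max_left _ _, fun k hk t ht lam hlam p hp ↦ ?_⟩
  have hkN : ((max 3 ⌈x₀⌉₊ : ℕ) : ℝ) ≤ |(k:ℝ)| := by exact_mod_cast hk
  have hk₃ : 3 ≤ |(k:ℝ)| := le_trans (by simp) hkN
  have hkx₀ : x₀ ≤ |(k:ℝ)| := (Nat.le_ceil x₀).trans (le_trans (by simp) hkN)
  have hsep := inv_log_mul_le_abs_pow_sub_pow (by omega) hk₃ ht hp
  have hpert := mul_rpow_sub_le_of_mul_log_le (s := (n:ℝ) - 1) (by linarith) (hx₀ _ hkx₀)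
  have hexp : |(k:ℝ)| ^ ((n:ℝ) - 1) = |(k:ℝ)| ^ (n - 1) := by
    rw [← Nat.cast_pred (by omega), rpow_natCast]
  rw [hexp] at hpert
  have hlog := (inv_log_mem_Ioc_of_three_le hk₃).1
  have hpow : |(k:ℝ)| ^ (n - 1)
      ≤ (|(|(k:ℝ)| - |(p:ℝ)|)| + 1) * (|(k:ℝ)| + |(p:ℝ)|) ^ (n - 1) :=
    (pow_le_pow_left₀ (abs_nonneg _) (le_add_of_nonneg_right (abs_nonneg _)) _).trans
      (le_mul_of_one_le_left (by positivity) (by linarith [abs_nonneg (|(k:ℝ)| - |(p:ℝ)|)]))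
  have hpos : 0 < (log |(k:ℝ)|)⁻¹ * (|(|(k:ℝ)| - |(p:ℝ)|)| + 1) * (|(k:ℝ)| + |(p:ℝ)|) ^ (n - 1) :=
    by positivity
  have htri := abs_sub_le_norm_sub_add_norm_sub ((2 * π * k + t) ^ n) ((2 * π * p + t) ^ n) lam
  rw [Complex.ofReal_pow, Complex.ofReal_pow] at htri
  linarith [mul_le_mul_of_nonneg_left hpow hlog.le]

/-- Let `n ≥ 2, m ≥ 1` be integers and `c₁ > 0`. There exist a constant
`c > 0` and a positive integer `N ≥ 3` such that: for every integer `k` with `|k| ≥ N`,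
every `t ∈ [−π/2, 3π/2)`, every `λ ∈ ℂ` with `|λ − (2πk + t)^n| ≤ c₁ |k|^{n−1−1/(2m)}`,
and every integer `p ∉ A(k,n,t)`, one has
`|λ − (2πp + t)^n| > c (ln|k|)⁻¹ (||k| − |p|| + 1)(|k| + |p|)^{n−1}`. -/
theorem stmt_4 (n m : ℕ) (hn : 2 ≤ n) (hm : 1 ≤ m) (c₁ : ℝ) (hc₁ : 0 < c₁) :
    ∃ c : ℝ, 0 < c ∧ ∃ N : ℕ, 3 ≤ N ∧
      ∀ k : ℤ, (N : ℤ) ≤ |k| →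
        ∀ t ∈ Set.Ico (-(π/2)) (3*π/2),
          ∀ lam : ℂ,
            ‖lam - ((2*π*(k:ℝ) + t : ℝ) : ℂ)^n‖
              ≤ c₁ * |(k:ℝ)| ^ ((n:ℝ) - 1 - 1/(2*(m:ℝ))) →
            ∀ p : ℤ, p ∉ Aset n k t →
              ‖lam - ((2*π*(p:ℝ) + t : ℝ) : ℂ)^n‖ >
                c * (Real.log |(k:ℝ)|)⁻¹ * (|(|(k:ℝ)| - |(p:ℝ)|)| + 1)
                  * (|(k:ℝ)| + |(p:ℝ)|)^(n-1) :=
  stmt_4_general n m hn hm c₁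
end

section
/- Let n ≥ 2, m ≥ 1 be integers and c₁ > 0. There exist a constant C > 0 and a positive integer N ≥ 3 such that: for every integer k with |k| ≥ N, every t ∈ [−π/2, 3π/2), every λ ∈ ℂ with |λ − (2πk + t)^n| ≤ c₁ |k|^{n−1−1/(2m)}, and every real d > 2|k|, one has Σ_{p ∈ ℤ, |p| > d} |p|^{n−2} / |λ − (2πp + t)^n| ≤ C/d. -/
/-!
For `|p| > d > 2|k|` the point `(2πp + t)^n` is so much larger than `λ`, which lies within
`|k|^n` of `(2πk + t)^n`, that `‖λ - (2πp + t)^n‖ ≥ |p|^n`. Each term of the series is therefore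
at most `1 / p^2`, and the tail `∑_{|p| > d} 1 / p^2` is at most `4 / d`.
-/

open Real Finset

lemma sum_inv_sq_le_of_injOn_natAbs {d : ℝ} (hd : 0 ≤ d) {s : Finset ℤ}
    (hs : ∀ p ∈ s, d < |(p : ℝ)|) (hinj : Set.InjOn Int.natAbs s) :
    ∑ p ∈ s, ((p : ℝ) ^ 2)⁻¹ ≤ 2 / (⌊d⌋₊ + 1) := by
  have himage : s.image Int.natAbs ⊆ Ioo ⌊d⌋₊ ((s.image Int.natAbs).sup id + 1) := by
    intro j hj
    obtain ⟨p, hp, rfl⟩ := mem_image.mp hj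
    refine mem_Ioo.mpr ⟨(Nat.floor_lt hd).mpr ?_, Nat.lt_succ_of_le (le_sup (f := id) hj)⟩
    simpa [Nat.cast_natAbs] using hs p hp
  calc ∑ p ∈ s, ((p : ℝ) ^ 2)⁻¹ = ∑ j ∈ s.image Int.natAbs, ((j : ℝ) ^ 2)⁻¹ := by
        rw [sum_image hinj]
        simp [Nat.cast_natAbs]
    _ ≤ ∑ j ∈ Ioo ⌊d⌋₊ ((s.image Int.natAbs).sup id + 1), ((j : ℝ) ^ 2)⁻¹ :=
        sum_le_sum_of_subset_of_nonneg himage fun _ _ _ ↦ by positivity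
    _ ≤ 2 / (⌊d⌋₊ + 1) := sum_Ioo_inv_sq_le _ _

lemma sum_inv_sq_le_of_lt_abs {d : ℝ} (hd : 0 < d) {s : Finset ℤ}
    (hs : ∀ p ∈ s, d < |(p : ℝ)|) : ∑ p ∈ s, ((p : ℝ) ^ 2)⁻¹ ≤ 4 / d := by
  have hfloor : 2 / ((⌊d⌋₊ : ℝ) + 1) ≤ 2 / d := by
    gcongr
    exact (Nat.lt_floor_add_one d).le
  have hnonneg := sum_inv_sq_le_of_injOn_natAbs hd.le (s := s.filter (0 ≤ ·))
    (fun p hp ↦ hs p (mem_filter.mp hp).1) fun p hp q hq h ↦ by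
      simp only [coe_filter, Set.mem_ofPred_eq] at hp hq; omega
  have hneg := sum_inv_sq_le_of_injOn_natAbs hd.le (s := s.filter (¬ 0 ≤ ·))
    (fun p hp ↦ hs p (mem_filter.mp hp).1) fun p hp q hq h ↦ by
      simp only [coe_filter, Set.mem_ofPred_eq] at hp hq; omega
  calc ∑ p ∈ s, ((p : ℝ) ^ 2)⁻¹ ≤ 2 / d + 2 / d := by
        rw [← sum_filter_add_sum_filter_not s (0 ≤ ·)]
        linarith
    _ = 4 / d := by ring

lemma summable_and_tsum_le_of_le_inv_sq {d : ℝ} (hd : 0 < d)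
    {f : {p : ℤ // d < |(p : ℝ)|} → ℝ} (hf₀ : ∀ p, 0 ≤ f p) (hf : ∀ p, f p ≤ ((p.1 : ℝ) ^ 2)⁻¹) :
    Summable f ∧ ∑' p, f p ≤ 4 / d := by
  have hsqℤ : Summable fun p : ℤ ↦ ((p : ℝ) ^ 2)⁻¹ := by
    simpa [one_div] using Real.summable_one_div_int_pow.mpr one_lt_two
  have hsq : Summable fun p : {p : ℤ // d < |(p : ℝ)|} ↦ ((p.1 : ℝ) ^ 2)⁻¹ := hsqℤ.subtype _
  have hsum := hsq.of_nonneg_of_le hf₀ hf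
  refine ⟨hsum, (hsum.tsum_le_tsum hf hsq).trans (hsq.tsum_le_of_sum_le fun s ↦ ?_)⟩
  have := sum_inv_sq_le_of_lt_abs hd (s := s.map (Function.Embedding.subtype _)) fun p hp ↦ by
    obtain ⟨q, -, rfl⟩ := mem_map.mp hp
    exact q.2
  rwa [sum_map] at this

lemma mul_rpow_le_pow {x c r : ℝ} {n : ℕ} (hx : 1 ≤ x) (hc : c ≤ x) (hr : r ≤ n - 1) :
    c * x ^ r ≤ x ^ n := by
  calc c * x ^ r ≤ x * x ^ r := mul_le_mul_of_nonneg_right hc (by positivity)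
    _ = x ^ (r + 1) := by rw [rpow_add_one (by positivity), mul_comm]
    _ ≤ x ^ (n : ℝ) := rpow_le_rpow_of_exponent_le hx (by linarith)
    _ = x ^ n := rpow_natCast x n

lemma pow_le_norm_sub_pow {n : ℕ} (hn : n ≠ 0) {x y z : ℝ} {w : ℂ} (hx : 0 ≤ x) (hy : 0 ≤ y)
    (hw : ‖w‖ ≤ y ^ n) (hz : x + y ≤ |z|) : x ^ n ≤ ‖w - (z : ℂ) ^ n‖ := by
  have hzn : x ^ n + y ^ n ≤ ‖(z : ℂ) ^ n‖ := by
    rw [norm_pow, Complex.norm_real, norm_eq_abs]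
    exact (pow_add_pow_le hx hy hn).trans (pow_le_pow_left₀ (by positivity) hz n)
  have := norm_le_norm_sub_add ((z : ℂ) ^ n) w
  rw [norm_sub_rev] at this
  linarith

lemma abs_two_pi_mul_add_le {t x : ℝ} (ht : |t| ≤ 3 * π / 2) (hx : 3 ≤ |x|) :
    |2 * π * x + t| ≤ 8 * |x| := by
  have h := abs_add_le (2 * π * x) t
  rw [abs_mul, abs_of_pos two_pi_pos] at h
  nlinarith [pi_lt_d2]

lemma le_abs_two_pi_mul_add {t x : ℝ} (ht : |t| ≤ 3 * π / 2) (hx : 8 ≤ |x|) :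
    11 / 2 * |x| ≤ |2 * π * x + t| := by
  have h := abs_sub_abs_le_abs_sub (2 * π * x) (-t)
  rw [abs_mul, abs_of_pos two_pi_pos, abs_neg, sub_neg_eq_add] at h
  nlinarith [pi_gt_d2]

lemma norm_le_nine_mul_pow_of_norm_sub_le {n : ℕ} (hn : n ≠ 0) {t x c r : ℝ} {lam : ℂ}
    (ht : |t| ≤ 3 * π / 2) (hx : 3 ≤ |x|) (hc : c ≤ |x|) (hr : r ≤ n - 1)
    (hlam : ‖lam - ((2 * π * x + t : ℝ) : ℂ) ^ n‖ ≤ c * |x| ^ r) :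
    ‖lam‖ ≤ (9 * |x|) ^ n := by
  calc ‖lam‖ ≤ ‖lam - ((2 * π * x + t : ℝ) : ℂ) ^ n‖ + ‖((2 * π * x + t : ℝ) : ℂ) ^ n‖ :=
        norm_le_norm_sub_add _ _
    _ ≤ |x| ^ n + (8 * |x|) ^ n := by
        gcongr
        · exact hlam.trans (mul_rpow_le_pow (by linarith) hc hr)
        · rw [norm_pow, Complex.norm_real, norm_eq_abs]
          exact pow_le_pow_left₀ (abs_nonneg _) (abs_two_pi_mul_add_le ht hx) n
    _ ≤ (9 * |x|) ^ n :=
        (pow_add_pow_le (abs_nonneg _) (by positivity) hn).trans_eq (by ring)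

lemma pow_sub_two_div_le_inv_sq {n : ℕ} (hn : 2 ≤ n) {y D : ℝ} (hy : y ≠ 0)
    (hD : |y| ^ n ≤ D) : |y| ^ (n - 2) / D ≤ (y ^ 2)⁻¹ := by
  calc |y| ^ (n - 2) / D ≤ |y| ^ (n - 2) / |y| ^ n := by gcongr
    _ = (y ^ 2)⁻¹ := by
        rw [← Nat.sub_add_cancel hn, pow_add, Nat.add_sub_cancel, sq_abs]
        field_simp

theorem stmt_5_general (n m : ℕ) (hn : 2 ≤ n) (c₁ : ℝ) :
    ∃ C : ℝ, 0 < C ∧ ∃ N : ℕ, 3 ≤ N ∧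
      ∀ k : ℤ, (N : ℤ) ≤ |k| →
        ∀ t ∈ Set.Ico (-(π/2)) (3*π/2),
          ∀ lam : ℂ,
            ‖lam - ((2*π*(k:ℝ) + t : ℝ) : ℂ)^n‖
              ≤ c₁ * |(k:ℝ)| ^ ((n:ℝ) - 1 - 1/(2*(m:ℝ))) →
            ∀ d : ℝ, 2*|(k:ℝ)| < d →
              Summable (fun p : {p : ℤ // d < |(p:ℝ)|} =>
                |(p.1:ℝ)|^(n-2) / ‖lam - ((2*π*(p.1:ℝ) + t : ℝ) : ℂ)^n‖) ∧
              (∑' p : {p : ℤ // d < |(p:ℝ)|},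
                  |(p.1:ℝ)|^(n-2) / ‖lam - ((2*π*(p.1:ℝ) + t : ℝ) : ℂ)^n‖)
                ≤ C / d := by
  refine ⟨4, by norm_num, max 4 ⌈c₁⌉₊, le_max_of_le_left (by norm_num), ?_⟩
  intro k hk t ht lam hlam d hd
  have hkN : ((max 4 ⌈c₁⌉₊ : ℕ) : ℝ) ≤ |(k : ℝ)| := by
    rw [← Int.cast_abs]
    exact_mod_cast hk
  have hk4 : 4 ≤ |(k : ℝ)| := le_trans (by norm_cast; exact le_max_left _ _) hkN
  have hc₁k : c₁ ≤ |(k : ℝ)| :=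
    (Nat.le_ceil c₁).trans (le_trans (by norm_cast; exact le_max_right _ _) hkN)
  have ht' : |t| ≤ 3 * π / 2 := abs_le.mpr ⟨by linarith [ht.1, pi_pos], ht.2.le⟩
  have hexp : (n : ℝ) - 1 - 1 / (2 * (m : ℝ)) ≤ n - 1 := by
    have : 0 ≤ 1 / (2 * (m : ℝ)) := by positivity
    linarith
  have hlam' := norm_le_nine_mul_pow_of_norm_sub_le (by omega) ht' (by linarith) hc₁k hexp hlam
  refine summable_and_tsum_le_of_le_inv_sq (by linarith) (fun p ↦ by positivity) fun ⟨p, hp⟩ ↦ ?_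
  have hp8 : 8 ≤ |(p : ℝ)| := by linarith
  exact pow_sub_two_div_le_inv_sq hn (abs_pos.mp (by linarith)) <|
    pow_le_norm_sub_pow (by omega) (abs_nonneg _) (by positivity) hlam'
      (by linarith [le_abs_two_pi_mul_add ht' hp8]) -- `9|k| < 9|p| / 2` as `2|k| < d < |p|`

/-- Let `n ≥ 2, m ≥ 1` be integers and `c₁ > 0`. There exist a constant
`C > 0` and a positive integer `N ≥ 3` such that: for every integer `k` with `|k| ≥ N`,
every `t ∈ [−π/2, 3π/2)`, every `λ ∈ ℂ` with `|λ − (2πk + t)^n| ≤ c₁ |k|^{n−1−1/(2m)}`,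
and every real `d > 2|k|`, one has
`Σ_{p ∈ ℤ, |p| > d} |p|^{n−2} / |λ − (2πp + t)^n| ≤ C/d`. -/
theorem stmt_5 (n m : ℕ) (hn : 2 ≤ n) (hm : 1 ≤ m) (c₁ : ℝ) (hc₁ : 0 < c₁) :
    ∃ C : ℝ, 0 < C ∧ ∃ N : ℕ, 3 ≤ N ∧
      ∀ k : ℤ, (N : ℤ) ≤ |k| →
        ∀ t ∈ Set.Ico (-(π/2)) (3*π/2),
          ∀ lam : ℂ,
            ‖lam - ((2*π*(k:ℝ) + t : ℝ) : ℂ)^n‖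
              ≤ c₁ * |(k:ℝ)| ^ ((n:ℝ) - 1 - 1/(2*(m:ℝ))) →
            ∀ d : ℝ, 2*|(k:ℝ)| < d →
              Summable (fun p : {p : ℤ // d < |(p:ℝ)|} =>
                |(p.1:ℝ)|^(n-2) / ‖lam - ((2*π*(p.1:ℝ) + t : ℝ) : ℂ)^n‖) ∧
              (∑' p : {p : ℤ // d < |(p:ℝ)|},
                  |(p.1:ℝ)|^(n-2) / ‖lam - ((2*π*(p.1:ℝ) + t : ℝ) : ℂ)^n‖)
                ≤ C / d :=
  stmt_5_general n m hn c₁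
end

section
/- Let n ≥ 2, m ≥ 1 be integers, t ∈ ℝ, λ ∈ ℂ, and for ν = 2, …, n let P_ν : [0,1] → M_m(ℂ) be matrix functions with Lebesgue-integrable entries. Let C ∈ M_m(ℂ) be a Hermitian matrix, μ_s ∈ ℝ and v_s ∈ ℂ^m a unit vector with C v_s = μ_s v_s, and set Φ_{p,s,t}(x) = v_s e^{i(2πp+t)x} and μ_{p,s}(t) = (2πp + t)^n + μ_s (2πp + t)^{n−2}. Suppose Ψ : [0,1] → ℂ^m is (n−1) times continuously differentiable with Ψ^{(n−1)} absolutely continuous, satisfies Ψ^{(ν)}(1) = e^{it} Ψ^{(ν)}(0) for ν = 0, 1, …, n−1, and satisfies (−i)^n Ψ^{(n)}(x) + (−i)^{n−2} P₂(x) Ψ^{(n−2)}(x) + Σ_{ν=3}^n P_ν(x) Ψ^{(n−ν)}(x) = λ Ψ(x) for almost every x ∈ [0,1]. Then for every p ∈ ℤ: (λ − μ_{p,s}(t))(Ψ, Φ_{p,s,t}) = (−i)^{n−2} ((P₂ − C) Ψ^{(n−2)}, Φ_{p,s,t}) + Σ_{ν=3}^n (P_ν Ψ^{(n−ν)}, Φ_{p,s,t}).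 -/
/-!
Pair the equation with the unit vector `v` and with `e^{-iρx}`, where `ρ = 2πp + t`. Since
`e^{-iρ} e^{it} = 1`, the quasi-periodic boundary conditions kill the boundary terms of every
integration by parts, so each derivative of `Ψ` costs a factor `iρ`:
`(Ψ^{(k)}, Φ) = (iρ)^k (Ψ, Φ)` for `k ≤ n`; the last step, against the merely integrable
`Ψ^{(n)}`, goes through Fubini on the triangle `0 ≤ y ≤ x ≤ 1`. As `(-i)^k (iρ)^k = ρ^k` and
`(C w, v) = μ (w, v)` for Hermitian `C`, the paired equation is the claimed identity.
-/

open Real MeasureTheory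

open Complex ComplexConjugate Set Matrix

theorem integral_primitive_mul_swap {𝕜 : Type*} [RCLike 𝕜] {a b : ℝ} {e w : ℝ → 𝕜} (hab : a ≤ b)
    (he : IntegrableOn e (Icc a b)) (hw : IntegrableOn w (Icc a b)) :
    ∫ x in a..b, (∫ y in a..x, w y) * e x = ∫ y in a..b, w y * ∫ x in y..b, e x := by
  set μ := volume.restrict (Ioc a b)
  have he' : Integrable e μ := he.mono_set Ioc_subset_Icc_self
  have hw' : Integrable w μ := hw.mono_set Ioc_subset_Icc_self
  set F : ℝ × ℝ → 𝕜 := {z | z.1 ≤ z.2}.indicator fun z => w z.1 * e z.2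
  have hF : Integrable F (μ.prod μ) :=
    (hw'.mul_prod he').indicator (measurableSet_le measurable_fst measurable_snd)
  have h_inner_fst : ∀ x ∈ Ioc a b, ∫ y, F (y, x) ∂μ = (∫ y in a..x, w y) * e x := by
    intro x hx
    have : (fun y => F (y, x)) = (Iic x).indicator fun y => w y * e x := by
      ext y; simp [F, indicator_apply]
    rw [this, integral_indicator measurableSet_Iic, Measure.restrict_restrict measurableSet_Iic,
      Iic_inter_Ioc_of_le hx.2, integral_mul_const, intervalIntegral.integral_of_le hx.1.le]
  have h_inner_snd : ∀ y ∈ Ioc a b, ∫ x, F (y, x) ∂μ = w y * ∫ x in y..b, e x := by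
    intro y hy
    have : (fun x => F (y, x)) = (Ici y).indicator fun x => w y * e x := by
      ext x; simp [F, indicator_apply]
    have hset : Ici y ∩ Ioc a b = Icc y b := by
      ext x; simp only [mem_inter_iff, mem_Ici, mem_Ioc, mem_Icc]; grind
    rw [this, integral_indicator measurableSet_Ici, Measure.restrict_restrict measurableSet_Ici,
      hset, integral_const_mul, integral_Icc_eq_integral_Ioc,
      intervalIntegral.integral_of_le hy.2]
  calc ∫ x in a..b, (∫ y in a..x, w y) * e x = ∫ x, ∫ y, F (y, x) ∂μ ∂μ := by
        rw [intervalIntegral.integral_of_le hab]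
        exact (setIntegral_congr_fun measurableSet_Ioc h_inner_fst).symm
    _ = ∫ y, ∫ x, F (y, x) ∂μ ∂μ := (integral_integral_swap (f := fun y x => F (y, x)) hF).symm
    _ = ∫ y in a..b, w y * ∫ x in y..b, e x := by
        rw [intervalIntegral.integral_of_le hab]
        exact setIntegral_congr_fun measurableSet_Ioc h_inner_snd

theorem ContDiffOn.iteratedDerivWithin_eq_add_integral {E : Type*} [NormedAddCommGroup E]
    [NormedSpace ℝ E] [CompleteSpace E] {f : ℝ → E} {N : WithTop ℕ∞} {a b x : ℝ} {k : ℕ}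
    (hf : ContDiffOn ℝ N f (Icc a b)) (hab : a < b) (hk : (k : WithTop ℕ∞) < N)
    (hx : x ∈ Icc a b) :
    iteratedDerivWithin k f (Icc a b) x =
      iteratedDerivWithin k f (Icc a b) a +
        ∫ y in a..x, iteratedDerivWithin (k + 1) f (Icc a b) y := by
  have hs := uniqueDiffOn_Icc hab
  have hcont : ContinuousOn (iteratedDerivWithin (k + 1) f (Icc a b)) (Icc a b) :=
    hf.continuousOn_iteratedDerivWithin (ENat.add_one_natCast_le_withTop_of_lt hk) hs
  have hderiv : ∀ y ∈ Ioo a x, HasDerivAt (iteratedDerivWithin k f (Icc a b))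
      (iteratedDerivWithin (k + 1) f (Icc a b) y) y := by
    intro y hy
    have hy' : y ∈ Ioo a b := ⟨hy.1, hy.2.trans_le hx.2⟩
    rw [iteratedDerivWithin_succ]
    exact ((hf.differentiableOn_iteratedDerivWithin hk hs).differentiableAt
      (Icc_mem_nhds hy'.1 hy'.2)).hasDerivAt.congr_deriv
      (derivWithin_of_mem_nhds (Icc_mem_nhds hy'.1 hy'.2)).symm
  rw [intervalIntegral.integral_eq_sub_of_hasDerivAt_of_le hx.1
    ((hf.continuousOn_iteratedDerivWithin hk.le hs).mono (Icc_subset_Icc_right hx.2)) hderiv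
    ((hcont.mono (Icc_subset_Icc_right hx.2)).intervalIntegrable_of_Icc hx.1)]
  abel

theorem ContinuousLinearMap.apply_eq_add_integral {𝕜 E F : Type*} [RCLike 𝕜] [NormedAddCommGroup E]
    [NormedSpace 𝕜 E] [NormedSpace ℝ E] [CompleteSpace E] [NormedAddCommGroup F] [NormedSpace 𝕜 F]
    [NormedSpace ℝ F] [CompleteSpace F]
    (L : E →L[𝕜] F) {u w : ℝ → E} {a b : ℝ} (hw : IntegrableOn w (Icc a b))
    (hu : ∀ x ∈ Icc a b, u x = u a + ∫ y in a..x, w y) :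
    ∀ x ∈ Icc a b, L (u x) = L (u a) + ∫ y in a..x, L (w y) := by
  intro x hx
  rw [hu x hx, map_add, L.intervalIntegral_comp_comm
    ((intervalIntegrable_iff_integrableOn_Icc_of_le hx.1).2
      (hw.mono_set (Icc_subset_Icc_right hx.2)))]

theorem hasDerivAt_conj_cexp_I_mul (ρ x : ℝ) :
    HasDerivAt (fun y : ℝ => conj (cexp (I * ρ * y))) (-(I * ρ) * conj (cexp (I * ρ * x))) x := by
  have h : HasDerivAt (fun y : ℝ => I * ρ * y) (I * ρ) x := by
    simpa using (ofRealCLM.hasDerivAt (x := x)).const_mul (I * ρ)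
  refine h.cexp.star.congr_deriv ?_
  simp [mul_comm]

theorem I_mul_integral_conj_cexp (ρ a b : ℝ) :
    I * ρ * ∫ x in a..b, conj (cexp (I * ρ * x)) =
      conj (cexp (I * ρ * a)) - conj (cexp (I * ρ * b)) := by
  have h := intervalIntegral.integral_eq_sub_of_hasDerivAt (a := a) (b := b)
    (fun x _ => hasDerivAt_conj_cexp_I_mul ρ x) (by apply Continuous.intervalIntegrable; fun_prop)
  rw [intervalIntegral.integral_const_mul] at h
  linear_combination -h

theorem integral_mul_conj_cexp_of_eq_add_integral {a b ρ : ℝ} {u w : ℝ → ℂ} (hab : a ≤ b)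
    (hw : IntegrableOn w (Icc a b)) (hu : ∀ x ∈ Icc a b, u x = u a + ∫ y in a..x, w y)
    (hbc : u b * conj (cexp (I * ρ * b)) = u a * conj (cexp (I * ρ * a))) :
    ∫ x in a..b, w x * conj (cexp (I * ρ * x)) =
      I * ρ * ∫ x in a..b, u x * conj (cexp (I * ρ * x)) := by
  set E : ℝ → ℂ := fun x => conj (cexp (I * ρ * x))
  set W : ℝ → ℂ := fun x => ∫ y in a..x, w y
  have hE : Continuous E := by fun_prop
  have hw_uIcc : IntegrableOn w (uIcc a b) := by rwa [uIcc_of_le hab]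
  have hW : ContinuousOn W (Icc a b) := by
    simpa [uIcc_of_le hab] using intervalIntegral.continuousOn_primitive_interval hw_uIcc
  have hE_tail : ∀ y, I * ρ * ∫ x in y..b, E x = E y - E b :=
    fun y => I_mul_integral_conj_cexp ρ y b
  have hWE : IntervalIntegrable (fun x => W x * E x) volume a b :=
    (hW.mul hE.continuousOn).intervalIntegrable_of_Icc hab
  have hsplit : ∫ x in a..b, u x * E x = u a * (∫ x in a..b, E x) + ∫ x in a..b, W x * E x := by
    rw [← intervalIntegral.integral_const_mul, ← intervalIntegral.integral_add
      ((hE.const_mul _).intervalIntegrable _ _) hWE]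
    refine intervalIntegral.integral_congr fun x hx => ?_
    rw [uIcc_of_le hab] at hx
    simp only [hu x hx, W]
    ring
  have htail : I * ρ * ∫ x in a..b, W x * E x = (∫ x in a..b, w x * E x) - W b * E b := by
    rw [integral_primitive_mul_swap hab hE.integrableOn_Icc hw,
      ← intervalIntegral.integral_const_mul]
    simp only [mul_left_comm (I * (ρ : ℂ)), hE_tail, mul_sub]
    rw [intervalIntegral.integral_sub (hw_uIcc.intervalIntegrable.mul_continuousOn hE.continuousOn)
      (hw_uIcc.intervalIntegrable.mul_const _), intervalIntegral.integral_mul_const]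
  have hub : u b = u a + W b := hu b (right_mem_Icc.2 hab)
  rw [hsplit, mul_add, mul_left_comm, I_mul_integral_conj_cexp, htail]
  linear_combination hbc - E b * hub

theorem Matrix.IsHermitian.mulVec_dotProduct_star {m : Type*} [Fintype m] {𝕜 : Type*} [RCLike 𝕜]
    {C : Matrix m m 𝕜} (hC : C.IsHermitian) {μ : ℝ} {v : m → 𝕜} (hCv : C *ᵥ v = (μ : 𝕜) • v)
    (z : m → 𝕜) : (C *ᵥ z) ⬝ᵥ star v = μ * (z ⬝ᵥ star v) := by
  rw [dotProduct_comm, Matrix.dotProduct_mulVec, ← hC.eq, ← Matrix.star_mulVec, hCv, star_smul,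
    RCLike.star_def, RCLike.conj_ofReal, smul_dotProduct, dotProduct_comm, smul_eq_mul]

theorem Matrix.integrableOn_mulVec {X R m n : Type*} [TopologicalSpace X] [T2Space X]
    [MeasurableSpace X] [OpensMeasurableSpace X] {μ : Measure X} [NormedRing R]
    [SecondCountableTopologyEither X R]
    [Fintype m] [Fintype n] {s : Set X}
    {P : X → Matrix m n R} {f : X → n → R} (hs : IsCompact s)
    (hP : ∀ i j, IntegrableOn (fun x => P x i j) s μ) (hf : ContinuousOn f s) :
    IntegrableOn (fun x => P x *ᵥ f x) s μ := by
  refine integrable_pi_iff.2 fun i => integrable_finsetSum _ fun j _ => ?_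
  exact (hP i j).mul_continuousOn ((continuous_apply j).comp_continuousOn hf) hs

theorem cexp_I_mul_two_pi_int_mul_add (p : ℤ) (t : ℝ) :
    cexp (I * (2 * π * p + t : ℝ)) = cexp (I * t) := by
  rw [ofReal_add, mul_add, Complex.exp_add]
  convert one_mul _
  convert exp_int_mul_two_pi_mul_I p using 2
  push_cast
  ring

noncomputable section innerExp

variable {ι : Type*} [Fintype ι]

def dotProductStarCLM (v : ι → ℂ) : (ι → ℂ) →L[ℂ] ℂ :=
  LinearMap.toContinuousLinearMap ((dotProductBilin ℂ ℂ).flip (star v))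

/-- The `L²([0,1], ℂ^ι)` inner product `(f, Φ)` with `Φ x = v e^{iρx}`. -/
def innerExp (v : ι → ℂ) (ρ : ℝ) (f : ℝ → ι → ℂ) : ℂ :=
  ∫ x in (0 : ℝ)..1, (∑ q, f x q * conj (v q)) * conj (cexp (I * ρ * x))

variable {v : ι → ℂ} {ρ : ℝ} {f g : ℝ → ι → ℂ}

theorem innerExp_eq (v : ι → ℂ) (ρ : ℝ) (f : ℝ → ι → ℂ) :
    innerExp v ρ f = ∫ x in (0 : ℝ)..1, dotProductStarCLM v (f x) * conj (cexp (I * ρ * x)) :=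
  rfl

theorem intervalIntegrable_dotProductStarCLM_mul_conj_cexp (hf : IntegrableOn f (Icc 0 1)) :
    IntervalIntegrable (fun x => dotProductStarCLM v (f x) * conj (cexp (I * ρ * x))) volume 0 1 :=
  (intervalIntegrable_iff_integrableOn_Icc_of_le zero_le_one).2 <|
    IntegrableOn.mul_continuousOn ((dotProductStarCLM v).integrable_comp hf)
      (by fun_prop) isCompact_Icc

theorem innerExp_add (hf : IntegrableOn f (Icc 0 1)) (hg : IntegrableOn g (Icc 0 1)) :
    innerExp v ρ (fun x => f x + g x) = innerExp v ρ f + innerExp v ρ g := by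
  simp only [innerExp_eq, map_add, add_mul]
  exact intervalIntegral.integral_add (intervalIntegrable_dotProductStarCLM_mul_conj_cexp hf)
    (intervalIntegrable_dotProductStarCLM_mul_conj_cexp hg)

theorem innerExp_sub (hf : IntegrableOn f (Icc 0 1)) (hg : IntegrableOn g (Icc 0 1)) :
    innerExp v ρ (fun x => f x - g x) = innerExp v ρ f - innerExp v ρ g := by
  simp only [innerExp_eq, map_sub, sub_mul]
  exact intervalIntegral.integral_sub (intervalIntegrable_dotProductStarCLM_mul_conj_cexp hf)
    (intervalIntegrable_dotProductStarCLM_mul_conj_cexp hg)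

theorem innerExp_smul (c : ℂ) : innerExp v ρ (fun x => c • f x) = c * innerExp v ρ f := by
  simp only [innerExp_eq, map_smul, smul_eq_mul, mul_assoc]
  exact intervalIntegral.integral_const_mul _ _

theorem innerExp_sum {κ : Type*} (s : Finset κ) {F : κ → ℝ → ι → ℂ}
    (hF : ∀ i ∈ s, IntegrableOn (F i) (Icc 0 1)) :
    innerExp v ρ (fun x => ∑ i ∈ s, F i x) = ∑ i ∈ s, innerExp v ρ (F i) := by
  simp only [innerExp_eq, map_sum, Finset.sum_mul]
  exact intervalIntegral.integral_finsetSum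
    fun i hi => intervalIntegrable_dotProductStarCLM_mul_conj_cexp (hF i hi)

theorem innerExp_congr_ae (h : ∀ᵐ x ∂volume.restrict (Icc (0 : ℝ) 1), f x = g x) :
    innerExp v ρ f = innerExp v ρ g := by
  refine intervalIntegral.integral_congr_ae ?_
  rw [ae_restrict_iff' measurableSet_Icc] at h
  filter_upwards [h] with x hx hx'
  rw [hx (Ioc_subset_Icc_self (by rwa [uIoc_of_le zero_le_one] at hx'))]

theorem innerExp_sub_mulVec_of_isHermitian {P : ℝ → Matrix ι ι ℂ} {C : Matrix ι ι ℂ}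
    (hC : C.IsHermitian) {μ : ℝ} (hCv : C *ᵥ v = (μ : ℂ) • v)
    (hPf : IntegrableOn (fun x => P x *ᵥ f x) (Icc 0 1)) (hf : ContinuousOn f (Icc 0 1)) :
    innerExp v ρ (fun x => (P x - C) *ᵥ f x) =
      innerExp v ρ (fun x => P x *ᵥ f x) - μ * innerExp v ρ f := by
  simp only [sub_mulVec]
  rw [innerExp_sub hPf (Matrix.integrableOn_mulVec (P := fun _ => C) isCompact_Icc
    (fun _ _ => integrableOn_const measure_Icc_lt_top.ne) hf)]
  congr 1
  rw [innerExp, innerExp, ← intervalIntegral.integral_const_mul]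
  refine intervalIntegral.integral_congr fun x _ => ?_
  rw [← mul_assoc]
  exact congrArg (· * _) (hC.mulVec_dotProduct_star hCv (f x))

theorem innerExp_of_eq_add_integral (hg : IntegrableOn g (Icc 0 1))
    (hf : ∀ x ∈ Icc (0 : ℝ) 1, f x = f 0 + ∫ y in 0..x, g y) (hbc : f 1 = cexp (I * ρ) • f 0) :
    innerExp v ρ g = I * ρ * innerExp v ρ f := by
  refine integral_mul_conj_cexp_of_eq_add_integral zero_le_one
    ((dotProductStarCLM v).integrable_comp hg)
    ((dotProductStarCLM v).apply_eq_add_integral hg hf) ?_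
  change dotProductStarCLM v (f 1) * _ = dotProductStarCLM v (f 0) * _
  rw [hbc, map_smul, smul_eq_mul, ofReal_one, ofReal_zero, mul_one, mul_zero, Complex.exp_zero,
    map_one, mul_one, mul_right_comm, mul_conj', norm_exp_I_mul_ofReal]
  simp

theorem innerExp_iteratedDerivWithin {Ψ : ℝ → ι → ℂ} {N : ℕ}
    (hΨ : ContDiffOn ℝ ((N : ℕ∞) : WithTop ℕ∞) Ψ (Icc 0 1))
    (hbc : ∀ k < N, iteratedDerivWithin k Ψ (Icc 0 1) 1 =
      cexp (I * ρ) • iteratedDerivWithin k Ψ (Icc 0 1) 0) :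
    ∀ k ≤ N, innerExp v ρ (iteratedDerivWithin k Ψ (Icc 0 1)) = (I * ρ) ^ k * innerExp v ρ Ψ := by
  have hD : ∀ k ≤ N, ContinuousOn (iteratedDerivWithin k Ψ (Icc 0 1)) (Icc 0 1) := fun k hk =>
    hΨ.continuousOn_iteratedDerivWithin (by exact_mod_cast hk) (uniqueDiffOn_Icc zero_lt_one)
  intro k hk
  induction k with
  | zero => simp
  | succ k ih =>
    rw [innerExp_of_eq_add_integral (hD (k + 1) hk).integrableOn_Icc
      (fun x hx => hΨ.iteratedDerivWithin_eq_add_integral zero_lt_one (by exact_mod_cast hk) hx)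
      (hbc k hk), ih (by omega)]
    ring

end innerExp

theorem stmt_11_general (n m : ℕ) (hn : 2 ≤ n) (t : ℝ) (lam : ℂ)
    (P : ℕ → ℝ → Matrix (Fin m) (Fin m) ℂ)
    (hP : ∀ ν ∈ Finset.Icc 2 n, ∀ i j : Fin m,
      IntegrableOn (fun x => P ν x i j) (Set.Icc (0:ℝ) 1))
    (C : Matrix (Fin m) (Fin m) ℂ) (hC : C.IsHermitian)
    (μ : ℝ) (v : Fin m → ℂ)
    (hCv : C.mulVec v = (μ : ℂ) • v)
    (Ψ : ℝ → Fin m → ℂ)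
    (hΨ : ContDiffOn ℝ ((n-1 : ℕ) : ℕ∞) Ψ (Set.Icc 0 1))
    (g : ℝ → Fin m → ℂ)
    (hg : IntegrableOn g (Set.Icc (0:ℝ) 1))
    (hAC : ∀ x ∈ Set.Icc (0:ℝ) 1, iteratedDerivWithin (n-1) Ψ (Set.Icc 0 1) x
        = iteratedDerivWithin (n-1) Ψ (Set.Icc 0 1) 0 + ∫ y in (0:ℝ)..x, g y)
    (hbc : ∀ ν < n, iteratedDerivWithin ν Ψ (Set.Icc 0 1) 1
        = Complex.exp (Complex.I * (t : ℂ)) • iteratedDerivWithin ν Ψ (Set.Icc 0 1) 0)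
    (hode : ∀ᵐ x ∂(volume.restrict (Set.Icc (0:ℝ) 1)),
        (-Complex.I)^n • g x
        + (-Complex.I)^(n-2) • (P 2 x).mulVec (iteratedDerivWithin (n-2) Ψ (Set.Icc 0 1) x)
        + ∑ ν ∈ Finset.Icc 3 n, (P ν x).mulVec (iteratedDerivWithin (n-ν) Ψ (Set.Icc 0 1) x)
        = lam • Ψ x) :
    ∀ p : ℤ,
      (lam - (((2*π*(p:ℝ) + t)^n + μ * (2*π*(p:ℝ) + t)^(n-2) : ℝ) : ℂ))
          * ∫ x in (0:ℝ)..1, (∑ q, Ψ x q * (starRingEnd ℂ) (v q))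
              * (starRingEnd ℂ) (Complex.exp (Complex.I * ((2*π*(p:ℝ) + t : ℝ) : ℂ) * (x:ℂ)))
        = (-Complex.I)^(n-2)
            * (∫ x in (0:ℝ)..1,
                (∑ q, (P 2 x - C).mulVec (iteratedDerivWithin (n-2) Ψ (Set.Icc 0 1) x) q
                    * (starRingEnd ℂ) (v q))
                  * (starRingEnd ℂ) (Complex.exp (Complex.I * ((2*π*(p:ℝ) + t : ℝ) : ℂ) * (x:ℂ))))
          + ∑ ν ∈ Finset.Icc 3 n,
              ∫ x in (0:ℝ)..1,
                (∑ q, (P ν x).mulVec (iteratedDerivWithin (n-ν) Ψ (Set.Icc 0 1) x) q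
                    * (starRingEnd ℂ) (v q))
                  * (starRingEnd ℂ) (Complex.exp (Complex.I * ((2*π*(p:ℝ) + t : ℝ) : ℂ) * (x:ℂ))) := by
  intro p
  set ρ : ℝ := 2 * π * p + t
  set D := fun k => iteratedDerivWithin k Ψ (Icc 0 1)
  have hD : ∀ k ≤ n - 1, ContinuousOn (D k) (Icc 0 1) := fun k hk =>
    hΨ.continuousOn_iteratedDerivWithin (by exact_mod_cast hk) (uniqueDiffOn_Icc zero_lt_one)
  have hbcρ : ∀ k < n, D k 1 = cexp (I * ρ) • D k 0 := by
    simpa only [ρ, cexp_I_mul_two_pi_int_mul_add] using hbc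
  have hΨk := innerExp_iteratedDerivWithin (v := v) hΨ fun k hk => hbcρ k (by omega)
  have hgΨ : innerExp v ρ g = (I * ρ) ^ n * innerExp v ρ Ψ := by
    rw [innerExp_of_eq_add_integral hg hAC (hbcρ (n - 1) (by omega)), hΨk (n - 1) le_rfl,
      ← mul_assoc, ← pow_succ', Nat.sub_add_cancel (by omega)]
  have hPD : ∀ ν ∈ Finset.Icc 2 n, IntegrableOn (fun x => P ν x *ᵥ D (n - ν) x) (Icc 0 1) :=
    fun ν hν => Matrix.integrableOn_mulVec isCompact_Icc (hP ν hν) (hD _ (by grind))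
  have hPD₂ := hPD 2 (Finset.mem_Icc.2 ⟨le_rfl, hn⟩)
  have hPD₃ : ∀ ν ∈ Finset.Icc 3 n, IntegrableOn (fun x => P ν x *ᵥ D (n - ν) x) (Icc 0 1) :=
    fun ν hν => hPD ν (Finset.Icc_subset_Icc (by norm_num) le_rfl hν)
  have hode' : (-I) ^ n * innerExp v ρ g
      + (-I) ^ (n - 2) * innerExp v ρ (fun x => P 2 x *ᵥ D (n - 2) x)
      + ∑ ν ∈ Finset.Icc 3 n, innerExp v ρ (fun x => P ν x *ᵥ D (n - ν) x)
      = lam * innerExp v ρ Ψ := by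
    have h := innerExp_congr_ae (v := v) (ρ := ρ) hode
    rwa [innerExp_add, innerExp_add, innerExp_smul, innerExp_smul, innerExp_sum _ hPD₃,
      innerExp_smul] at h
    · exact hg.smul ((-I) ^ n)
    · exact hPD₂.smul ((-I) ^ (n - 2))
    · exact (hg.smul ((-I) ^ n)).add (hPD₂.smul ((-I) ^ (n - 2)))
    · exact integrable_finsetSum _ hPD₃
  have hpow : ∀ k : ℕ, (-I) ^ k * (I * ρ) ^ k = (ρ : ℂ) ^ k := fun k => by
    rw [← mul_pow, show -I * (I * ρ) = (ρ : ℂ) by ring_nf; simp]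
  show (lam - _) * innerExp v ρ Ψ =
    (-I) ^ (n - 2) * innerExp v ρ _ + ∑ ν ∈ Finset.Icc 3 n, innerExp v ρ _
  rw [innerExp_sub_mulVec_of_isHermitian hC hCv hPD₂ (hD (n - 2) (by omega)),
    hΨk (n - 2) (by omega)]
  push_cast
  linear_combination -hode' + (-I) ^ n * hgΨ + innerExp v ρ Ψ * hpow n +
    μ * innerExp v ρ Ψ * hpow (n - 2)

/-- Let `n ≥ 2, m ≥ 1` be integers, `t ∈ ℝ`, `λ ∈ ℂ`, and for
`ν = 2, …, n` let `P_ν : [0,1] → M_m(ℂ)` be matrix functions with Lebesgue-integrable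
entries. Let `C ∈ M_m(ℂ)` be a Hermitian matrix, `μ ∈ ℝ` and `v ∈ ℂ^m` a unit vector
with `C v = μ v`, and set `Φ_{p,s,t}(x) = v e^{i(2πp+t)x}` and
`μ_{p,s}(t) = (2πp + t)^n + μ (2πp + t)^{n−2}`. Suppose `Ψ : [0,1] → ℂ^m` is `(n−1)`
times continuously differentiable with `Ψ^{(n−1)}` absolutely continuous (encoded:
`Ψ^{(n−1)}` is the indefinite integral of an integrable `g`, which plays the role
of `Ψ^{(n)}`), satisfies `Ψ^{(ν)}(1) = e^{it} Ψ^{(ν)}(0)` for `ν = 0, …, n−1`, and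
satisfies
`(−i)^n Ψ^{(n)}(x) + (−i)^{n−2} P₂(x) Ψ^{(n−2)}(x) + Σ_{ν=3}^n P_ν(x) Ψ^{(n−ν)}(x) = λ Ψ(x)`
for a.e. `x ∈ [0,1]`. Then for every `p ∈ ℤ`:
`(λ − μ_{p,s}(t))(Ψ, Φ_{p,s,t}) = (−i)^{n−2} ((P₂ − C) Ψ^{(n−2)}, Φ_{p,s,t}) + Σ_{ν=3}^n (P_ν Ψ^{(n−ν)}, Φ_{p,s,t})`. -/
theorem stmt_11 (n m : ℕ) (hn : 2 ≤ n) (hm : 1 ≤ m) (t : ℝ) (lam : ℂ)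
    (P : ℕ → ℝ → Matrix (Fin m) (Fin m) ℂ)
    (hP : ∀ ν ∈ Finset.Icc 2 n, ∀ i j : Fin m,
      IntegrableOn (fun x => P ν x i j) (Set.Icc (0:ℝ) 1))
    (C : Matrix (Fin m) (Fin m) ℂ) (hC : C.IsHermitian)
    (μ : ℝ) (v : Fin m → ℂ)
    (hv : ∑ q, ‖v q‖^2 = 1)
    (hCv : C.mulVec v = (μ : ℂ) • v)
    (Ψ : ℝ → Fin m → ℂ)
    (hΨ : ContDiffOn ℝ ((n-1 : ℕ) : ℕ∞) Ψ (Set.Icc 0 1))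
    (g : ℝ → Fin m → ℂ)
    (hg : IntegrableOn g (Set.Icc (0:ℝ) 1))
    (hAC : ∀ x ∈ Set.Icc (0:ℝ) 1, iteratedDerivWithin (n-1) Ψ (Set.Icc 0 1) x
        = iteratedDerivWithin (n-1) Ψ (Set.Icc 0 1) 0 + ∫ y in (0:ℝ)..x, g y)
    (hbc : ∀ ν < n, iteratedDerivWithin ν Ψ (Set.Icc 0 1) 1
        = Complex.exp (Complex.I * (t : ℂ)) • iteratedDerivWithin ν Ψ (Set.Icc 0 1) 0)
    (hode : ∀ᵐ x ∂(volume.restrict (Set.Icc (0:ℝ) 1)),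
        (-Complex.I)^n • g x
        + (-Complex.I)^(n-2) • (P 2 x).mulVec (iteratedDerivWithin (n-2) Ψ (Set.Icc 0 1) x)
        + ∑ ν ∈ Finset.Icc 3 n, (P ν x).mulVec (iteratedDerivWithin (n-ν) Ψ (Set.Icc 0 1) x)
        = lam • Ψ x) :
    ∀ p : ℤ,
      (lam - (((2*π*(p:ℝ) + t)^n + μ * (2*π*(p:ℝ) + t)^(n-2) : ℝ) : ℂ))
          * ∫ x in (0:ℝ)..1, (∑ q, Ψ x q * (starRingEnd ℂ) (v q))
              * (starRingEnd ℂ) (Complex.exp (Complex.I * ((2*π*(p:ℝ) + t : ℝ) : ℂ) * (x:ℂ)))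
        = (-Complex.I)^(n-2)
            * (∫ x in (0:ℝ)..1,
                (∑ q, (P 2 x - C).mulVec (iteratedDerivWithin (n-2) Ψ (Set.Icc 0 1) x) q
                    * (starRingEnd ℂ) (v q))
                  * (starRingEnd ℂ) (Complex.exp (Complex.I * ((2*π*(p:ℝ) + t : ℝ) : ℂ) * (x:ℂ))))
          + ∑ ν ∈ Finset.Icc 3 n,
              ∫ x in (0:ℝ)..1,
                (∑ q, (P ν x).mulVec (iteratedDerivWithin (n-ν) Ψ (Set.Icc 0 1) x) q
                    * (starRingEnd ℂ) (v q))
                  * (starRingEnd ℂ) (Complex.exp (Complex.I * ((2*π*(p:ℝ) + t : ℝ) : ℂ) * (x:ℂ))) :=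
  stmt_11_general n m hn t lam P hP C hC μ v hCv Ψ hΨ g hg hAC hbc hode
end
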